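/- arXiv:2305.01927 — 4 statements merged into one kernel-verified Lean document; each statement's English description precedes it below -/
import Mathlib

section
/- Let G be a finite threshold graph whose chromatic number χ(G) is divisible by 3 and which is not ω-unique (i.e., G contains at least two cliques of order ω(G)). Then the robust chromatic number of G equals χ(G)/3 + 1. -/
/-!
Threshold graphs contain no induced `2K₂`. Hence every vertex outside a maximum clique `K` misses
a vertex of `K`, the complement of `K` is independent, and `χ = ω = #K = 3k`.

Upper bound: cut `K` into `k` triangles and let every vertex of a triangle select the edge to the
next vertex of that triangle; the triangles become independent, and together with the independent
rest of the graph they give `k + 1` colours.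

Lower bound: for a 1-selection `f`, write `σ v` for the other end of `f v`. A deleted edge `uv`
satisfies `σ u = v` or `σ v = u`, so a colour class of a `k`-colouring of `G_f` inside a clique of
`G` has at most three vertices, and a class of exactly three is the triangle `v, σ v, σ (σ v)`.
A `k`-colouring would cut two different maximum cliques into such triangles; two different triangles
of the same colour are then disjoint with no edges between them in `G`, an induced `2K₂`.
-/

open SimpleGraph

/-- A 1-selection on `G`: each vertex `v` selects (at most) one pair containing `v`;
deleting the selected pairs from the edge set removes at most one edge incident
to each vertex.  (Selecting a non-edge, e.g. the diagonal, deletes nothing at `v`.) -/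
def IsOneSelection {V : Type*} (G : SimpleGraph V) (f : V → Sym2 V) : Prop :=
  ∀ v : V, v ∈ f v

/-- The 1-removed graph `G_f`. -/
def oneRemoved {V : Type*} (G : SimpleGraph V) (f : V → Sym2 V) : SimpleGraph V :=
  G.deleteEdges (Set.range f)

/-- The chromatic number of `G` as a natural number. -/
noncomputable def chromNum {V : Type*} (G : SimpleGraph V) : ℕ :=
  sInf {n : ℕ | G.Colorable n}

/-- The robust chromatic number `χ₁(G)`: the minimum of `χ(G_f)` over all 1-selections. -/
noncomputable def robustChromNum {V : Type*} (G : SimpleGraph V) : ℕ :=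
  sInf {m : ℕ | ∃ f : V → Sym2 V, IsOneSelection G f ∧ chromNum (oneRemoved G f) = m}

/-- The robust clique number `ω₁(G)`: the minimum of `ω(G_f)` over all 1-selections. -/
noncomputable def robustCliqueNum {V : Type*} (G : SimpleGraph V) : ℕ :=
  sInf {m : ℕ | ∃ f : V → Sym2 V, IsOneSelection G f ∧ (oneRemoved G f).cliqueNum = m}

/-- A set of vertices is independent if no two of its elements are adjacent. -/
def IsIndepVxSet {V : Type*} (G : SimpleGraph V) (s : Set V) : Prop :=
  s.Pairwise fun a b => ¬ G.Adj a b

/-- The independence number of `G`. -/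
noncomputable def indepNum {V : Type*} (G : SimpleGraph V) : ℕ :=
  sSup {n : ℕ | ∃ s : Finset V, IsIndepVxSet G ↑s ∧ s.card = n}

/-- The robust independence number `α₁(G)`: the maximum of `α(G_f)` over all 1-selections. -/
noncomputable def robustIndepNum {V : Type*} (G : SimpleGraph V) : ℕ :=
  sSup {m : ℕ | ∃ f : V → Sym2 V, IsOneSelection G f ∧ _root_.indepNum (oneRemoved G f) = m}

/-- `U` is robust independent in `G` if some 1-selection makes it independent. -/
def IsRobustIndep {V : Type*} (G : SimpleGraph V) (U : Set V) : Prop :=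
  ∃ f : V → Sym2 V, IsOneSelection G f ∧ IsIndepVxSet (oneRemoved G f) U

/-- Threshold graph. -/
def IsThresholdGraph {V : Type*} (G : SimpleGraph V) : Prop :=
  ∃ (h : ℝ) (g : V → ℝ), ∀ x y : V, x ≠ y → (G.Adj x y ↔ g x + g y > h)

/-- `G` is ω-unique: it has exactly one clique of order `ω(G)`. -/
def IsOmegaUnique {V : Type*} (G : SimpleGraph V) : Prop :=
  ∃! s : Finset V, G.IsNClique G.cliqueNum s

/-- Split graph: vertex set partitions into a clique and an independent set. -/
def IsSplitGraph {V : Type*} (G : SimpleGraph V) : Prop :=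
  ∃ A : Set V, G.IsClique A ∧ IsIndepVxSet G Aᶜ

/-- Chordal graph: no induced cycle of length greater than 3. -/
def IsChordalGraph {V : Type*} (G : SimpleGraph V) : Prop :=
  ∀ n : ℕ, 4 ≤ n → ¬ ∃ φ : Fin n ↪ V,
    ∀ i j : Fin n, G.Adj (φ i) (φ j) ↔ (SimpleGraph.cycleGraph n).Adj i j

/-- Interval graph: vertices can be assigned nonempty closed real intervals so that
two distinct vertices are adjacent iff their intervals intersect. -/
def IsIntervalGraph {V : Type*} (G : SimpleGraph V) : Prop :=
  ∃ a b : V → ℝ, (∀ v, a v ≤ b v) ∧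
    ∀ u v : V, u ≠ v →
      (G.Adj u v ↔ (Set.Icc (a u) (b u) ∩ Set.Icc (a v) (b v)).Nonempty)

/-- Unit interval graph: vertices can be labelled by reals so that two distinct
vertices are adjacent iff their labels are at distance less than 1. -/
def IsUnitIntervalGraph {V : Type*} (G : SimpleGraph V) : Prop :=
  ∃ r : V → ℝ, ∀ u v : V, u ≠ v → (G.Adj u v ↔ |r u - r v| < 1)

/-- Quasi-unicyclic: every connected component contains at most one cycle,
i.e. any two cycles lying in the same component have the same edge set. -/
def QuasiUnicyclic {V : Type*} [DecidableEq V] (G : SimpleGraph V) : Prop :=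
  ∀ (u v : V) (p : G.Walk u u) (q : G.Walk v v),
    p.IsCycle → q.IsCycle → G.Reachable u v →
      p.edges.toFinset = q.edges.toFinset

/-- The Kneser graph `KG(n,k)`. -/
def kneserGraph (n k : ℕ) : SimpleGraph {s : Finset (Fin n) // s.card = k} where
  Adj a b := a ≠ b ∧ Disjoint a.1 b.1
  symm := by
    constructor
    intro a b hab
    exact ⟨hab.1.symm, hab.2.symm⟩
  loopless := by
    constructor
    intro a ha
    exact ha.1 rfl

open Finset

theorem IsThresholdGraph.adj_or_adj {V : Type*} {G : SimpleGraph V} (hG : IsThresholdGraph G)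
    {a b x y : V} (hab : G.Adj a b) (hxy : G.Adj x y) (hax : a ≠ x) (hby : b ≠ y) :
    G.Adj a x ∨ G.Adj b y := by
  obtain ⟨h, g, hg⟩ := hG
  rw [hg a x hax, hg b y hby]
  have := (hg a b hab.ne).1 hab
  have := (hg x y hxy.ne).1 hxy
  by_contra! hcon
  linarith [hcon.1, hcon.2]

theorem IsThresholdGraph.adj_of_adj_of_not_adj {V : Type*} {G : SimpleGraph V} {K : Finset V}
    (hG : IsThresholdGraph G) (hK : G.IsClique (K : Set V)) {u v x : V}
    (hu : u ∉ K) (hv : v ∉ K)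
    (huv : G.Adj u v) (hx : x ∈ K) (hux : ¬ G.Adj u x) : ∀ z ∈ K, z ≠ x → G.Adj v z :=
  fun _ hz hzx => (hG.adj_or_adj huv (hK hx hz hzx.symm) (ne_of_mem_of_not_mem hx hu).symm
    (ne_of_mem_of_not_mem hz hv).symm).resolve_left hux

section MaximumClique

variable {V : Type*} [Finite V] {G : SimpleGraph V} {K : Finset V}

theorem exists_not_adj_of_isNClique_cliqueNum (hK : G.IsNClique G.cliqueNum K) {w : V}
    (hw : w ∉ K) : ∃ x ∈ K, ¬ G.Adj w x := by
  classical
  by_contra! h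
  have hcl : G.IsClique (insert w K : Finset V) := by
    rw [coe_insert]
    exact hK.isClique.insert fun x hx _ => h x hx
  have := hcl.card_le_cliqueNum
  rw [card_insert_of_notMem hw, hK.card_eq] at this
  omega

theorem IsThresholdGraph.isIndepVxSet_compl (hG : IsThresholdGraph G)
    (hK : G.IsNClique G.cliqueNum K) : IsIndepVxSet G (↑K)ᶜ := by
  classical
  intro u hu v hv _ huv
  simp only [Set.mem_compl_iff, mem_coe] at hu hv
  obtain ⟨x, hx, hux⟩ := exists_not_adj_of_isNClique_cliqueNum hK hu
  have hvK := hG.adj_of_adj_of_not_adj hK.isClique hu hv huv hx hux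
  have hvx : ¬ G.Adj v x := by
    intro hvx
    obtain ⟨y, hy, hvy⟩ := exists_not_adj_of_isNClique_cliqueNum hK hv
    by_cases hyx : y = x
    exacts [hvy (hyx ▸ hvx), hvy (hvK y hy hyx)]
  have huK := hG.adj_of_adj_of_not_adj hK.isClique hv hu huv.symm hx hvx
  -- swapping `x` for `u` and `v` enlarges the maximum clique
  have hcl : G.IsClique (insert u (insert v (K.erase x)) : Finset V) := by
    rw [coe_insert, coe_insert]
    refine (hK.isClique.subset (coe_subset.2 (erase_subset x K))).insert
      (fun b hb _ => hvK b (mem_of_mem_erase hb) (ne_of_mem_erase hb)) |>.insert ?_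
    rintro b (rfl | hb) _
    exacts [huv, huK b (mem_of_mem_erase hb) (ne_of_mem_erase hb)]
  have := hcl.card_le_cliqueNum
  rw [card_insert_of_notMem (by simp [huv.ne, hu]), card_insert_of_notMem (by simp [hv]),
    card_erase_of_mem hx, hK.card_eq] at this
  have := hK.card_eq ▸ card_pos.2 ⟨x, hx⟩
  omega

theorem colorable_cliqueNum_of_isIndepVxSet_compl (hK : G.IsNClique G.cliqueNum K)
    (hind : IsIndepVxSet G (↑K)ᶜ) : G.Colorable G.cliqueNum := by
  classical
  choose! x hxK hx using fun w (hw : w ∉ K) => exists_not_adj_of_isNClique_cliqueNum hK hw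
  let color : V → K := fun v => if hv : v ∈ K then ⟨v, hv⟩ else ⟨x v, hxK v hv⟩
  have c : G.Coloring K := Coloring.mk color fun {u v} huv heq => by
    by_cases hu : u ∈ K <;> by_cases hv : v ∈ K <;> simp only [color, hu, hv, dif_pos, dif_neg,
      not_false_eq_true, Subtype.mk.injEq] at heq
    · exact huv.ne heq
    · exact hx v hv (heq ▸ huv.symm)
    · exact hx u hu (heq ▸ huv)
    · exact hind hu hv huv.ne huv
  simpa [hK.card_eq] using c.colorable

end MaximumClique

section ChromNum

variable {V : Type*} {G : SimpleGraph V} {n : ℕ}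

theorem chromNum_le_of_colorable (h : G.Colorable n) : chromNum G ≤ n := Nat.sInf_le h

theorem colorable_chromNum [Fintype V] : G.Colorable (chromNum G) :=
  Nat.sInf_mem (s := {n | G.Colorable n}) ⟨_, G.colorable_of_fintype⟩

theorem lt_chromNum_of_not_colorable [Fintype V] (h : ¬ G.Colorable n) : n < chromNum G := by
  by_contra! hle
  exact h (colorable_chromNum.mono hle)

theorem IsThresholdGraph.chromNum_eq_cliqueNum [Fintype V] (hG : IsThresholdGraph G) :
    chromNum G = G.cliqueNum := by
  obtain ⟨K, hK⟩ := G.exists_isNClique_cliqueNum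
  refine le_antisymm (chromNum_le_of_colorable ?_) ?_
  · exact colorable_cliqueNum_of_isIndepVxSet_compl hK (hG.isIndepVxSet_compl hK)
  · exact hK.card_eq ▸ hK.isClique.card_le_of_colorable colorable_chromNum

theorem robustChromNum_eq_succ [Fintype V]
    (hlow : ∀ f, IsOneSelection G f → ¬ (oneRemoved G f).Colorable n)
    (hup : ∃ f, IsOneSelection G f ∧ (oneRemoved G f).Colorable (n + 1)) :
    robustChromNum G = n + 1 := by
  obtain ⟨f₀, hf₀, hcol⟩ := hup
  have hχ : chromNum (oneRemoved G f₀) = n + 1 :=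
    le_antisymm (chromNum_le_of_colorable hcol) (lt_chromNum_of_not_colorable (hlow f₀ hf₀))
  refine le_antisymm (Nat.sInf_le ⟨f₀, hf₀, hχ⟩) (le_csInf ⟨_, f₀, hf₀, hχ⟩ ?_)
  rintro _ ⟨f, hf, rfl⟩
  exact lt_chromNum_of_not_colorable (hlow f hf)

end ChromNum

theorem exists_isNClique_cliqueNum_ne {V : Type*} {G : SimpleGraph V} (hG : ¬ IsOmegaUnique G)
    {K : Finset V} (hK : G.IsNClique G.cliqueNum K) :
    ∃ K', G.IsNClique G.cliqueNum K' ∧ K' ≠ K := by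
  by_contra! h
  exact hG ⟨K, hK, h⟩

section PairsCovered

variable {α : Type*} {σ : α → α} {T : Finset α}

def PairsCoveredBy (σ : α → α) (T : Finset α) : Prop :=
  ∀ p ∈ T, ∀ q ∈ T, p ≠ q → σ p = q ∨ σ q = p

theorem PairsCoveredBy.card_le_three (h : PairsCoveredBy σ T) : #T ≤ 3 := by
  classical
  -- the pairs `(p, σ p)` number at most `#T` and, with their swaps, cover `T.offDiag`
  set F := T.offDiag.filter fun x => σ x.1 = x.2
  have hF : #F ≤ #T := card_le_card_of_injOn Prod.fst
    (fun x hx => (mem_offDiag.1 (mem_filter.1 hx).1).1)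
    (fun x hx y hy hxy => Prod.ext hxy <| by
      rw [← (mem_filter.1 hx).2, ← (mem_filter.1 hy).2, hxy])
  have hcover : T.offDiag ⊆ F ∪ F.image Prod.swap := by
    rintro ⟨p, q⟩ hpq
    obtain ⟨hp, hq, hne⟩ := mem_offDiag.1 hpq
    rcases h p hp q hq hne with h' | h'
    · exact mem_union_left _ (mem_filter.2 ⟨hpq, h'⟩)
    · refine mem_union_right _ (mem_image.2 ⟨(q, p), mem_filter.2 ⟨?_, h'⟩, rfl⟩)
      exact mem_offDiag.2 ⟨hq, hp, hne.symm⟩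
  have := (card_le_card hcover).trans ((card_union_le _ _).trans (add_le_add le_rfl card_image_le))
  rw [offDiag_card, Nat.sub_le_iff_le_add] at this
  nlinarith

theorem PairsCoveredBy.eq_triple [DecidableEq α] (h : PairsCoveredBy σ T) (hT : #T = 3) {v : α}
    (hv : v ∈ T) : T = {v, σ v, σ (σ v)} := by
  have h2 : #(T.erase v) = 2 := by rw [card_erase_of_mem hv, hT]
  obtain ⟨a, b, hab, hvab⟩ := card_eq_two.1 h2
  have ha : a ∈ T.erase v := by simp [hvab]
  have hb : b ∈ T.erase v := by simp [hvab]
  rw [← insert_erase hv, hvab]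
  have hva := h v hv a (mem_of_mem_erase ha) (ne_of_mem_erase ha).symm
  have hvb := h v hv b (mem_of_mem_erase hb) (ne_of_mem_erase hb).symm
  have hab' := h a (mem_of_mem_erase ha) b (mem_of_mem_erase hb) hab
  have hav := ne_of_mem_erase ha
  have hbv := ne_of_mem_erase hb
  grind

theorem PairsCoveredBy.apply_mem [DecidableEq α] (h : PairsCoveredBy σ T) (hT : #T = 3) {v : α}
    (hv : v ∈ T) : σ v ∈ T := by
  rw [h.eq_triple hT hv]
  simp

end PairsCovered

namespace IsOneSelection

variable {V : Type*} {G : SimpleGraph V} {f : V → Sym2 V} (hf : IsOneSelection G f)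
include hf

noncomputable def partner (v : V) : V := Sym2.Mem.other (hf v)

theorem eq_mk_partner (v : V) : f v = s(v, hf.partner v) := (Sym2.other_spec (hf v)).symm

theorem partner_eq_or_partner_eq {u v : V} (h : s(u, v) ∈ Set.range f) :
    hf.partner u = v ∨ hf.partner v = u := by
  obtain ⟨w, hw⟩ := h
  rcases Sym2.mem_iff.1 (hw ▸ hf w) with rfl | rfl
  · exact .inl (Sym2.congr_right.1 ((hf.eq_mk_partner w).symm.trans hw))
  · exact .inr (Sym2.congr_right.1 ((hf.eq_mk_partner w).symm.trans (hw.trans Sym2.eq_swap)))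

theorem partner_eq_or_partner_eq_of_adj {β : Type*} (c : (oneRemoved G f).Coloring β) {u v : V}
    (huv : G.Adj u v) (hc : c u = c v) : hf.partner u = v ∨ hf.partner v = u :=
  hf.partner_eq_or_partner_eq (not_not.1 fun hdel => c.valid (deleteEdges_adj.2 ⟨huv, hdel⟩) hc)

theorem pairsCoveredBy_colorClass {β : Type*} [DecidableEq β] (c : (oneRemoved G f).Coloring β)
    {L : Finset V} (hL : G.IsClique (L : Set V)) (i : β) :
    PairsCoveredBy hf.partner {v ∈ L | c v = i} := by
  intro p hp q hq hpq
  rw [mem_filter] at hp hq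
  exact hf.partner_eq_or_partner_eq_of_adj c (hL hp.1 hq.1 hpq) (hp.2.trans hq.2.symm)

theorem card_colorClass_eq_three {k : ℕ} (c : (oneRemoved G f).Coloring (Fin k)) {L : Finset V}
    (hL : G.IsNClique (3 * k) L) (i : Fin k) : #{v ∈ L | c v = i} = 3 := by
  classical
  have hle : ∀ j ∈ univ, #{v ∈ L | c v = j} ≤ 3 := fun j _ =>
    (hf.pairsCoveredBy_colorClass c hL.isClique j).card_le_three
  have hsum : ∑ j, #{v ∈ L | c v = j} = ∑ _j : Fin k, 3 := by
    rw [← card_eq_sum_card_fiberwise (fun v _ => mem_univ (c v)), hL.card_eq]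
    simp [mul_comm]
  exact (sum_eq_sum_iff_of_le hle).1 hsum i (mem_univ i)

end IsOneSelection

theorem IsThresholdGraph.not_colorable_oneRemoved {V : Type*} {G : SimpleGraph V}
    (hG : IsThresholdGraph G) {f : V → Sym2 V} (hf : IsOneSelection G f) {k : ℕ}
    {K K' : Finset V} (hK : G.IsNClique (3 * k) K) (hK' : G.IsNClique (3 * k) K') (hne : K ≠ K') :
    ¬ (oneRemoved G f).Colorable k := by
  classical
  rintro ⟨c⟩
  obtain ⟨i, hi⟩ : ∃ i, {v ∈ K | c v = i} ≠ {v ∈ K' | c v = i} := by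
    by_contra! h
    exact hne <| ext fun v => by simpa using congr(v ∈ $(h (c v)))
  set T := {v ∈ K | c v = i}
  set T' := {v ∈ K' | c v = i}
  have hT := hf.pairsCoveredBy_colorClass c hK.isClique i
  have hT' := hf.pairsCoveredBy_colorClass c hK'.isClique i
  have h3 : #T = 3 := hf.card_colorClass_eq_three c hK i
  have h3' : #T' = 3 := hf.card_colorClass_eq_three c hK' i
  have hdisj : ∀ v ∈ T, v ∉ T' := fun v hv hv' =>
    hi ((hT.eq_triple h3 hv).trans (hT'.eq_triple h3' hv').symm)
  have hnadj : ∀ p ∈ T, ∀ q ∈ T', ¬ G.Adj p q := by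
    intro p hp q hq hpq
    have hc : c p = c q := (mem_filter.1 hp).2.trans (mem_filter.1 hq).2.symm
    rcases hf.partner_eq_or_partner_eq_of_adj c hpq hc with h | h
    · exact hdisj q (h ▸ hT.apply_mem h3 hp) hq
    · exact hdisj p hp (h ▸ hT'.apply_mem h3' hq)
  obtain ⟨x, hx⟩ := card_pos.1 (h3 ▸ three_pos : 0 < #T)
  obtain ⟨x', hx'⟩ := card_pos.1 (h3' ▸ three_pos : 0 < #T')
  obtain ⟨y, hy, hyx⟩ := exists_mem_ne (by omega : 1 < #T) x
  obtain ⟨y', hy', hyx'⟩ := exists_mem_ne (by omega : 1 < #T') x'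
  have hxy := hK.isClique (mem_filter.1 hx).1 (mem_filter.1 hy).1 hyx.symm
  have hxy' := hK'.isClique (mem_filter.1 hx').1 (mem_filter.1 hy').1 hyx'.symm
  rcases hG.adj_or_adj hxy hxy' (fun h => hdisj x hx (h ▸ hx')) (fun h => hdisj y hy (h ▸ hy'))
    with h | h
  exacts [hnadj x hx x' hx' h, hnadj y hy y' hy' h]

theorem exists_isOneSelection_colorable_succ {V : Type*} {G : SimpleGraph V} {K : Finset V}
    {k : ℕ} (hK : #K = 3 * k) (hind : IsIndepVxSet G (↑K)ᶜ) :
    ∃ f, IsOneSelection G f ∧ (oneRemoved G f).Colorable (k + 1) := by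
  classical
  -- `K` is cut into the triangles `e⁻¹ (a, ·)`, each selecting its edges cyclically
  let e : K ≃ Fin k × Fin 3 :=
    (Fintype.equivFinOfCardEq (by simp [hK, mul_comm])).trans finProdFinEquiv.symm
  let next : K → V := fun v => e.symm ((e v).1, (e v).2 + 1)
  let f : V → Sym2 V := fun v => if hv : v ∈ K then s(v, next ⟨v, hv⟩) else s(v, v)
  have hnext : ∀ a b : K, (e a).1 = (e b).1 → a ≠ b →
      (next a : V) = b ∨ (next b : V) = a := by
    intro a b hab hne
    have hcyc : ∀ j j' : Fin 3, j ≠ j' → j + 1 = j' ∨ j' + 1 = j := by decide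
    have h2 : (e a).2 ≠ (e b).2 := fun h => hne (e.injective (Prod.ext hab h))
    rcases hcyc _ _ h2 with h | h
    · left; simp [next, hab, h]
    · right; simp [next, ← hab, h]
  refine ⟨f, fun v => by by_cases hv : v ∈ K <;> simp [f, hv], ?_⟩
  let color : V → Option (Fin k) := fun v => if hv : v ∈ K then some (e ⟨v, hv⟩).1 else none
  have c : (oneRemoved G f).Coloring (Option (Fin k)) := Coloring.mk color fun {u v} huv heq => by
    obtain ⟨huv, hdel⟩ := deleteEdges_adj.1 huv
    by_cases hu : u ∈ K <;> by_cases hv : v ∈ K <;> simp only [color, hu, hv, dif_pos, dif_neg,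
      not_false_eq_true, Option.some.injEq, reduceCtorEq] at heq
    · apply hdel
      rcases hnext ⟨u, hu⟩ ⟨v, hv⟩ heq (by simpa using huv.ne) with h | h
      · exact ⟨u, by simp [f, hu, h]⟩
      · exact ⟨v, by simp [f, hv, h, Sym2.eq_swap]⟩
    · exact hind hu hv huv.ne huv
  simpa using c.colorable

theorem robustChromNum_of_threshold_not_omegaUnique_general
    {V : Type} [Fintype V] (G : SimpleGraph V)
    (hthr : IsThresholdGraph G) (hdiv : 3 ∣ chromNum G) (hnu : ¬ IsOmegaUnique G) :
    robustChromNum G = chromNum G / 3 + 1 := by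
  obtain ⟨K, hK⟩ := G.exists_isNClique_cliqueNum
  obtain ⟨K', hK', hne⟩ := exists_isNClique_cliqueNum_ne hnu hK
  have hind := hthr.isIndepVxSet_compl hK
  rw [hthr.chromNum_eq_cliqueNum] at hdiv ⊢
  obtain ⟨k, hk⟩ := hdiv
  rw [hk] at hK hK'
  rw [hk, Nat.mul_div_cancel_left k three_pos]
  exact robustChromNum_eq_succ (fun f hf => hthr.not_colorable_oneRemoved hf hK' hK hne)
    (exists_isOneSelection_colorable_succ hK.card_eq hind)

/-- For a finite threshold graph `G` with `3 ∣ χ(G)` which is not ω-unique,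
`χ₁(G) = χ(G)/3 + 1`. -/
theorem robustChromNum_of_threshold_not_omegaUnique
    {V : Type} [Fintype V] [DecidableEq V] (G : SimpleGraph V)
    (hthr : IsThresholdGraph G) (hdiv : 3 ∣ chromNum G) (hnu : ¬ IsOmegaUnique G) :
    robustChromNum G = chromNum G / 3 + 1 :=
  robustChromNum_of_threshold_not_omegaUnique_general G hthr hdiv hnu
end

section
/- For every integer k ≥ 2 there exists a finite interval graph G_k such that ω(G_k) = χ(G_k) = k and ω₁(G_k) = χ₁(G_k) = ⌈k/2⌉. -/
open SimpleGraph

/-!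
Let `T` be the complete ternary tree whose nodes have depth at most `(k - 1) / 2`. Replace every
node by two twin vertices (the deepest nodes by a single vertex when `k` is odd) and join two
vertices when their nodes are comparable. Numbering the leaves of the ternary tree in base 3, the
leaves below a node form a block of consecutive integers, and comparable nodes have nested blocks
while incomparable ones have disjoint blocks: this is an interval graph. A root-to-leaf branch is a
clique of `k` vertices, and numbering the vertices of each branch `0, …, k - 1` is a proper
`k`-colouring.

If every vertex selects the edge to its twin, the remaining graph is coloured by depth, with
`⌈k/2⌉` colours. Conversely, given any 1-selection, walk down from the root, entering at each node
a child whose subtree contains neither vertex selected by the two vertices of the node: there are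
three children and at most two are excluded. Then, inserting the vertices of the branch from the
top, each new vertex has at most one removed edge to the vertices already inserted, so the branch
splits into two cliques of the 1-removed graph, and one of them has `⌈k/2⌉` vertices.
-/

open Finset

section OneRemoved

variable {V : Type*} {G : SimpleGraph V} {f : V → Sym2 V}

theorem oneRemoved_adj_iff (hf : IsOneSelection G f) {x y : V} :
    (oneRemoved G f).Adj x y ↔ G.Adj x y ∧ f x ≠ s(x, y) ∧ f y ≠ s(x, y) := by
  simp only [oneRemoved, deleteEdges_adj, Set.mem_range, not_exists]
  refine ⟨fun ⟨h, hne⟩ => ⟨h, hne x, hne y⟩, fun ⟨h, hx, hy⟩ => ⟨h, fun v hv => ?_⟩⟩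
  rcases Sym2.mem_iff.mp (hv ▸ hf v) with rfl | rfl
  exacts [hx hv, hy hv]

end OneRemoved

section TwoCliques

variable {V : Type*} [DecidableEq V] {H : SimpleGraph V}

def IsCoveredByTwoCliques (H : SimpleGraph V) (S : Finset V) : Prop :=
  ∃ A ⊆ S, H.IsClique (A : Set V) ∧ H.IsClique ((S \ A : Finset V) : Set V)

theorem isCoveredByTwoCliques_empty : IsCoveredByTwoCliques H ∅ :=
  ⟨∅, subset_rfl, by simp, by simp⟩

/-- `u` joins the clique of the cover that does not contain its non-neighbour. -/
theorem IsCoveredByTwoCliques.insert_of_forall_nonAdj_eq {S : Finset V}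
    (hS : IsCoveredByTwoCliques H S) {u z : V} (hz : ∀ a ∈ S, a ≠ u → ¬ H.Adj u a → a = z) :
    IsCoveredByTwoCliques H (insert u S) := by
  by_cases huS : u ∈ S
  · rwa [insert_eq_of_mem huS]
  obtain ⟨A, hAS, hA, hB⟩ := hS
  have huA : u ∉ A := fun h => huS (hAS h)
  have adj_of_ne : ∀ a ∈ S, a ≠ z → H.Adj u a := fun a ha haz => by
    by_contra h
    exact haz (hz a ha (fun hau => huS (hau ▸ ha)) h)
  by_cases hzA : z ∈ A
  · refine ⟨A, hAS.trans (subset_insert u S), hA, ?_⟩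
    rw [insert_sdiff_of_notMem _ huA, coe_insert]
    refine hB.insert fun b hb _ => adj_of_ne b (mem_sdiff.mp hb).1 ?_
    rintro rfl
    exact (mem_sdiff.mp hb).2 hzA
  · refine ⟨insert u A, insert_subset_insert u hAS, ?_, ?_⟩
    · rw [coe_insert]
      exact hA.insert fun b hb _ => adj_of_ne b (hAS hb) (ne_of_mem_of_not_mem hb hzA)
    · rwa [insert_sdiff_insert, sdiff_insert_of_notMem huS]

theorem IsCoveredByTwoCliques.exists_isClique {S : Finset V} (hS : IsCoveredByTwoCliques H S) :
    ∃ K : Finset V, H.IsClique (K : Set V) ∧ #S ≤ 2 * #K := by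
  obtain ⟨A, hAS, hA, hB⟩ := hS
  have hcard := card_sdiff_add_card_eq_card hAS
  rcases le_total #A #(S \ A) with h | h
  · exact ⟨S \ A, hB, by omega⟩
  · exact ⟨A, hA, by omega⟩

/-- The only possible non-neighbour of `x` in `S` is the partner selected by `x`. -/
theorem IsCoveredByTwoCliques.insert_of_isOneSelection {G : SimpleGraph V} {f : V → Sym2 V}
    (hf : IsOneSelection G f) {S : Finset V} (hS : IsCoveredByTwoCliques (oneRemoved G f) S)
    {x : V} (hx : ∀ a ∈ S, a ≠ x → G.Adj x a ∧ (f a = s(x, a) → f x = s(x, a))) :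
    IsCoveredByTwoCliques (oneRemoved G f) (insert x S) := by
  refine hS.insert_of_forall_nonAdj_eq (z := Sym2.Mem.other (hf x)) fun a ha hax hnadj => ?_
  obtain ⟨hadj, hsel⟩ := hx a ha hax
  have hfx : f x = s(x, a) := by
    by_contra hne
    exact hnadj ((oneRemoved_adj_iff hf).mpr ⟨hadj, hne, fun h => hne (hsel h)⟩)
  exact (Sym2.congr_right.mp ((Sym2.other_spec (hf x)).trans hfx)).symm

end TwoCliques

section Numbers

variable {V : Type*} {H : SimpleGraph V}

theorem chromNum_le_of_colorable_s5 {c : ℕ} (h : H.Colorable c) : chromNum H ≤ c :=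
  Nat.sInf_le h

theorem SimpleGraph.IsClique.card_le_chromNum [Finite V] {s : Finset V}
    (hs : H.IsClique (s : Set V)) : #s ≤ chromNum H := by
  have := Fintype.ofFinite V
  exact le_csInf ⟨_, H.colorable_of_fintype⟩ fun _ hc => hs.card_le_of_colorable hc

theorem cliqueNum_le_of_colorable {c : ℕ} (h : H.Colorable c) : H.cliqueNum ≤ c := by
  obtain ⟨s, hs⟩ := H.exists_isNClique_cliqueNum
  exact hs.card_eq ▸ hs.isClique.card_le_of_colorable h

theorem cliqueNum_eq_and_chromNum_eq_of_isClique_of_colorable [Finite V] {m : ℕ} {s : Finset V}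
    (hs : H.IsClique (s : Set V)) (hm : m ≤ #s) (hc : H.Colorable m) :
    H.cliqueNum = m ∧ chromNum H = m :=
  ⟨(cliqueNum_le_of_colorable hc).antisymm (hm.trans hs.card_le_cliqueNum),
    (chromNum_le_of_colorable_s5 hc).antisymm (hm.trans hs.card_le_chromNum)⟩

theorem robustCliqueNum_eq_and_robustChromNum_eq [Finite V] {G : SimpleGraph V} {m : ℕ}
    (hclique : ∀ f, IsOneSelection G f →
      ∃ s : Finset V, (oneRemoved G f).IsClique (s : Set V) ∧ m ≤ #s)
    (hcolor : ∃ f, IsOneSelection G f ∧ (oneRemoved G f).Colorable m) :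
    robustCliqueNum G = m ∧ robustChromNum G = m := by
  obtain ⟨f, hf, hc⟩ := hcolor
  obtain ⟨s, hs, hms⟩ := hclique f hf
  obtain ⟨hω, hχ⟩ := cliqueNum_eq_and_chromNum_eq_of_isClique_of_colorable hs hms hc
  constructor
  · refine IsLeast.csInf_eq ⟨⟨f, hf, hω⟩, ?_⟩
    rintro _ ⟨g, hg, rfl⟩
    obtain ⟨t, ht, hmt⟩ := hclique g hg
    exact hmt.trans ht.card_le_cliqueNum
  · refine IsLeast.csInf_eq ⟨⟨f, hf, hχ⟩, ?_⟩
    rintro _ ⟨g, hg, rfl⟩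
    obtain ⟨t, ht, hmt⟩ := hclique g hg
    exact hmt.trans ht.card_le_chromNum

end Numbers

namespace SimpleGraph.Iso

variable {V W : Type*} {G : SimpleGraph V} {G' : SimpleGraph W}

theorem isIntervalGraph (e : G ≃g G') (h : IsIntervalGraph G) : IsIntervalGraph G' := by
  obtain ⟨a, b, hab, hadj⟩ := h
  refine ⟨a ∘ e.symm, b ∘ e.symm, fun v => hab _, fun u v huv => ?_⟩
  rw [← e.symm.map_adj_iff]
  exact hadj _ _ (e.symm.injective.ne huv)

theorem exists_isNClique (e : G ≃g G') {n : ℕ} (h : ∃ s, G.IsNClique n s) :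
    ∃ s, G'.IsNClique n s := by
  obtain ⟨s, hs⟩ := h
  refine ⟨s.map e.toEquiv.toEmbedding, ?_, by rw [card_map, hs.card_eq]⟩
  rw [coe_map]
  rintro _ ⟨x, hx, rfl⟩ _ ⟨y, hy, rfl⟩ hxy
  exact e.map_adj_iff.mpr (hs.isClique hx hy (ne_of_apply_ne _ hxy))

theorem cliqueNum_eq (e : G ≃g G') : G.cliqueNum = G'.cliqueNum :=
  congrArg sSup (Set.ext fun _ => ⟨e.exists_isNClique, e.symm.exists_isNClique⟩)

theorem chromNum_eq (e : G ≃g G') : chromNum G = chromNum G' :=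
  congrArg sInf (Set.ext fun _ => ⟨fun h => h.of_hom e.symm.toHom, fun h => h.of_hom e.toHom⟩)

theorem exists_isOneSelection_oneRemoved_iso (e : G ≃g G') {f : V → Sym2 V}
    (hf : IsOneSelection G f) :
    ∃ f', IsOneSelection G' f' ∧ Nonempty (oneRemoved G f ≃g oneRemoved G' f') := by
  refine ⟨fun w => (f (e.symm w)).map e,
    fun w => Sym2.mem_map.mpr ⟨e.symm w, hf _, e.apply_symm_apply w⟩,
    ⟨{ toEquiv := e.toEquiv, map_rel_iff' := fun {x y} => ?_ }⟩⟩
  have hrange : s(e x, e y) ∈ Set.range (fun w => (f (e.symm w)).map e) ↔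
      s(x, y) ∈ Set.range f := by
    rw [← Sym2.map_mk, ← e.symm.surjective.range_comp]
    simp only [Function.comp_def, Set.mem_range, (Sym2.map.injective e.injective).eq_iff]
  simp only [oneRemoved, deleteEdges_adj, RelIso.coe_fn_toEquiv, e.map_adj_iff, hrange]

theorem robustCliqueNum_eq (e : G ≃g G') : robustCliqueNum G = robustCliqueNum G' := by
  refine congrArg sInf (Set.ext fun m => ⟨?_, ?_⟩)
  · rintro ⟨f, hf, rfl⟩
    obtain ⟨f', hf', ⟨i⟩⟩ := e.exists_isOneSelection_oneRemoved_iso hf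
    exact ⟨f', hf', i.cliqueNum_eq.symm⟩
  · rintro ⟨f, hf, rfl⟩
    obtain ⟨f', hf', ⟨i⟩⟩ := e.symm.exists_isOneSelection_oneRemoved_iso hf
    exact ⟨f', hf', i.cliqueNum_eq.symm⟩

theorem robustChromNum_eq (e : G ≃g G') : robustChromNum G = robustChromNum G' := by
  refine congrArg sInf (Set.ext fun m => ⟨?_, ?_⟩)
  · rintro ⟨f, hf, rfl⟩
    obtain ⟨f', hf', ⟨i⟩⟩ := e.exists_isOneSelection_oneRemoved_iso hf
    exact ⟨f', hf', i.chromNum_eq.symm⟩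
  · rintro ⟨f, hf, rfl⟩
    obtain ⟨f', hf', ⟨i⟩⟩ := e.symm.exists_isOneSelection_oneRemoved_iso hf
    exact ⟨f', hf', i.chromNum_eq.symm⟩

end SimpleGraph.Iso

section Digits

def ternaryValue (w : List (Fin 3)) : ℕ := Nat.ofDigits 3 (w.map Fin.val)

theorem ternaryValue_lt (w : List (Fin 3)) : ternaryValue w < 3 ^ w.length := by
  simpa [ternaryValue] using
    Nat.ofDigits_lt_base_pow_length (l := w.map Fin.val) (by norm_num) (by simp)

theorem ternaryValue_append_div (u v : List (Fin 3)) :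
    ternaryValue (u ++ v) / 3 ^ u.length = ternaryValue v := by
  have h := ternaryValue_lt u
  unfold ternaryValue at h ⊢
  rw [List.map_append, Nat.ofDigits_append, List.length_map, Nat.add_mul_div_left _ _
    (by positivity), Nat.div_eq_of_lt h, zero_add]

theorem ternaryValue_div_pow {w : List (Fin 3)} {m : ℕ} (hm : m ≤ w.length) :
    ternaryValue w / 3 ^ m = ternaryValue (w.drop m) := by
  have := ternaryValue_append_div (w.take m) (w.drop m)
  rwa [List.take_append_drop, List.length_take_of_le hm] at this

theorem ternaryValue_injective_of_length_eq {v w : List (Fin 3)} (hlen : v.length = w.length)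
    (h : ternaryValue v = ternaryValue w) : v = w :=
  List.map_injective_iff.mpr Fin.val_injective
    (Nat.ofDigits_inj_of_len_eq (by norm_num) (by simpa using hlen) (by simp) (by simp) h)

theorem exists_div_eq_ternaryValue_iff_suffix {D : ℕ} {v w : List (Fin 3)}
    (hvw : v.length ≤ w.length) (hw : w.length ≤ D) :
    (∃ n, n / 3 ^ (D - v.length) = ternaryValue v ∧ n / 3 ^ (D - w.length) = ternaryValue w) ↔
      v <:+ w := by
  have hpow : 3 ^ (D - v.length) = 3 ^ (D - w.length) * 3 ^ (w.length - v.length) := by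
    rw [← pow_add]; congr 1; omega
  constructor
  · rintro ⟨n, hnv, hnw⟩
    rw [hpow, ← Nat.div_div_eq_div_mul, hnw, ternaryValue_div_pow (Nat.sub_le _ _)] at hnv
    rw [ternaryValue_injective_of_length_eq (by simp; omega) hnv.symm]
    exact List.drop_suffix _ _
  · rintro ⟨u, rfl⟩
    refine ⟨ternaryValue (u ++ v) * 3 ^ (D - (u ++ v).length), ?_, ?_⟩
    · rw [hpow, ← Nat.div_div_eq_div_mul, Nat.mul_div_cancel _ (by positivity),
        List.length_append, Nat.add_sub_cancel, ternaryValue_append_div]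
    · exact Nat.mul_div_cancel _ (by positivity)

theorem exists_div_eq_ternaryValue_iff {D : ℕ} {v w : List (Fin 3)} (hv : v.length ≤ D)
    (hw : w.length ≤ D) :
    (∃ n, n / 3 ^ (D - v.length) = ternaryValue v ∧ n / 3 ^ (D - w.length) = ternaryValue w) ↔
      v <:+ w ∨ w <:+ v := by
  rcases le_total v.length w.length with h | h
  · rw [exists_div_eq_ternaryValue_iff_suffix h hw, or_iff_left_of_imp fun hwv => ?_]
    rw [hwv.eq_of_length (h.antisymm' hwv.length_le)]
  · rw [exists_congr fun _ => and_comm, exists_div_eq_ternaryValue_iff_suffix h hv,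
      or_iff_right_of_imp fun hvw => ?_]
    rw [hvw.eq_of_length (h.antisymm' hvw.length_le)]

end Digits

theorem exists_cons_not_suffix (w l₁ l₂ : List (Fin 3)) :
    ∃ c : Fin 3, ¬ c :: w <:+ l₁ ∧ ¬ c :: w <:+ l₂ := by
  have unique : ∀ {c d : Fin 3} {l : List (Fin 3)}, c :: w <:+ l → d :: w <:+ l → c = d :=
    fun hc hd => List.head_eq_of_cons_eq
      ((List.suffix_of_suffix_length_le hc hd (by simp)).eq_of_length (by simp))
  by_contra! h
  replace h : ∀ c : Fin 3, c :: w <:+ l₁ ∨ c :: w <:+ l₂ := fun c => or_iff_not_imp_left.mpr (h c)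
  rcases h 0 with h0 | h0 <;> rcases h 1 with h1 | h1 <;> rcases h 2 with h2 | h2 <;>
    first
    | exact absurd (unique h0 h1) (by decide)
    | exact absurd (unique h0 h2) (by decide)
    | exact absurd (unique h1 h2) (by decide)

theorem Icc_inter_Icc_nonempty_iff {a b c d : ℕ} :
    (Set.Icc (a : ℝ) (a + b - 1 / 2) ∩ Set.Icc (c : ℝ) (c + d - 1 / 2)).Nonempty ↔
      ∃ n : ℕ, a ≤ n ∧ n < a + b ∧ c ≤ n ∧ n < c + d := by
  constructor
  · rintro ⟨t, ⟨hat, htb⟩, hct, htd⟩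
    have hmax : max (a : ℝ) c ≤ t := max_le hat hct
    refine ⟨max a c, le_max_left a c, ?_, le_max_right a c, ?_⟩
    · have : ((max a c : ℕ) : ℝ) < ((a + b : ℕ) : ℝ) := by push_cast; linarith
      exact_mod_cast this
    · have : ((max a c : ℕ) : ℝ) < ((c + d : ℕ) : ℝ) := by push_cast; linarith
      exact_mod_cast this
  · rintro ⟨n, han, hnb, hcn, hnd⟩
    refine ⟨n, ⟨by exact_mod_cast han, ?_⟩, by exact_mod_cast hcn, ?_⟩
    · have : (n : ℝ) + 1 ≤ a + b := by exact_mod_cast hnb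
      linarith
    · have : (n : ℝ) + 1 ≤ c + d := by exact_mod_cast hnd
      linarith

/-- Vertex `idx` of the ternary tree node `word`. The node is recorded by its path from the root,
most recent step first, and the node at depth `d` carries the vertices `2d` and `2d + 1` (those
below `k`), so that vertex `j` sits at depth `j / 2`. -/
@[ext]
structure TreeVert (k : ℕ) where
  idx : ℕ
  word : List (Fin 3)
  idx_lt : idx < k
  length_word : word.length = idx / 2

namespace TreeVert

variable {k : ℕ}

instance : Finite (TreeVert k) :=
  have := (List.finite_length_le (Fin 3) k).to_subtype
  Finite.of_injective
    (fun x : TreeVert k => ((⟨x.idx, x.idx_lt⟩ : Fin k),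
      (⟨x.word, by have := x.idx_lt; have := x.length_word; simp only [Set.mem_ofPred_eq]; omega⟩ :
        {l : List (Fin 3) | l.length ≤ k})))
    fun x y h => by
      simp only [Prod.mk.injEq, Fin.mk.injEq, Subtype.mk.injEq] at h
      exact TreeVert.ext h.1 h.2

instance : DecidableEq (TreeVert k) := fun _ _ => decidable_of_iff' _ TreeVert.ext_iff

theorem length_word_lt (x : TreeVert k) : x.word.length < k := by
  have := x.idx_lt; have := x.length_word; omega

end TreeVert

def treeGraph (k : ℕ) : SimpleGraph (TreeVert k) where
  Adj x y := x ≠ y ∧ (x.word <:+ y.word ∨ y.word <:+ x.word)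
  symm := ⟨fun _ _ h => ⟨h.1.symm, h.2.symm⟩⟩
  loopless := ⟨fun _ h => h.1 rfl⟩

namespace treeGraph

variable {k : ℕ}

theorem word_eq_of_adj {x y : TreeVert k} (h : (treeGraph k).Adj x y)
    (hlen : x.word.length = y.word.length) : x.word = y.word := by
  rcases h.2 with h | h
  exacts [h.eq_of_length hlen, (h.eq_of_length hlen.symm).symm]

theorem idx_ne_of_adj {x y : TreeVert k} (h : (treeGraph k).Adj x y) : x.idx ≠ y.idx := fun hidx =>
  h.1 (TreeVert.ext hidx
    (word_eq_of_adj h (by rw [x.length_word, y.length_word, hidx])))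

theorem colorable : (treeGraph k).Colorable k :=
  ⟨Coloring.mk (fun x => ⟨x.idx, x.idx_lt⟩) fun h heq => idx_ne_of_adj h (Fin.mk.inj_iff.mp heq)⟩

def spine (k : ℕ) : Finset (TreeVert k) :=
  univ.map ⟨fun j : Fin k => ⟨j, List.replicate (j / 2) 0, j.2, List.length_replicate⟩,
    fun _ _ h => Fin.ext (congrArg TreeVert.idx h)⟩

theorem card_spine : #(spine k) = k := by
  rw [spine, card_map, card_univ, Fintype.card_fin]

theorem isClique_spine : (treeGraph k).IsClique (spine k : Set (TreeVert k)) := by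
  have hsuffix : ∀ m n : ℕ, m ≤ n → List.replicate m (0 : Fin 3) <:+ List.replicate n 0 :=
    fun m n h => ⟨List.replicate (n - m) 0, by rw [← List.replicate_add, Nat.sub_add_cancel h]⟩
  simp only [spine, coe_map, coe_univ, Set.image_univ]
  rintro _ ⟨i, rfl⟩ _ ⟨j, rfl⟩ hij
  exact ⟨hij, (le_total (i / 2 : ℕ) (j / 2)).imp (hsuffix _ _) (hsuffix _ _)⟩

theorem cliqueNum_eq_and_chromNum_eq : (treeGraph k).cliqueNum = k ∧ chromNum (treeGraph k) = k :=
  cliqueNum_eq_and_chromNum_eq_of_isClique_of_colorable isClique_spine card_spine.ge colorable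

/-- The interval of a vertex is the block of integers whose `k`-digit base-3 expansion starts with
the path to its node, shrunk by `1 / 2` on the right so that neighbouring blocks do not touch. -/
theorem isIntervalGraph : IsIntervalGraph (treeGraph k) := by
  let width : TreeVert k → ℕ := fun x => 3 ^ (k - x.word.length)
  let start : TreeVert k → ℕ := fun x => ternaryValue x.word * width x
  have div_eq_iff : ∀ n q v : ℕ, 0 < q → (n / q = v ↔ v * q ≤ n ∧ n < v * q + q) :=
    fun n q v hq => by rw [Nat.div_eq_iff hq]; omega
  have mem_block : ∀ x n, n / width x = ternaryValue x.word ↔ start x ≤ n ∧ n < start x + width x :=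
    fun x n => div_eq_iff _ _ _ (by positivity)
  refine ⟨fun x => start x, fun x => start x + width x - 1 / 2, fun x => ?_, fun x y hxy => ?_⟩
  · have : (1 : ℝ) ≤ width x := by exact_mod_cast Nat.one_le_pow _ _ (by norm_num)
    linarith
  rw [Icc_inter_Icc_nonempty_iff, show (treeGraph k).Adj x y ↔ _ ∧ _ from Iff.rfl,
    and_iff_right hxy, ← exists_div_eq_ternaryValue_iff x.length_word_lt.le y.length_word_lt.le]
  exact exists_congr fun n => (and_congr (mem_block x n) (mem_block y n)).trans and_assoc

/-- Each vertex selects the edge to the other vertex of its node, if there is one. -/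
def pairTwins (x : TreeVert k) : Sym2 (TreeVert k) :=
  if h : x.idx + 1 - 2 * (x.idx % 2) < k then
    s(x, ⟨x.idx + 1 - 2 * (x.idx % 2), x.word, h, by rw [x.length_word]; omega⟩)
  else s(x, x)

theorem isOneSelection_pairTwins : IsOneSelection (treeGraph k) pairTwins := fun x => by
  unfold pairTwins
  split <;> simp

theorem colorable_oneRemoved_pairTwins :
    (oneRemoved (treeGraph k) pairTwins).Colorable ((k + 1) / 2) := by
  refine ⟨Coloring.mk (fun x => ⟨x.idx / 2, by have := x.idx_lt; omega⟩) fun {x y} hadj heq => ?_⟩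
  obtain ⟨hxy, hsel, -⟩ := (oneRemoved_adj_iff isOneSelection_pairTwins).mp hadj
  have hdepth : x.idx / 2 = y.idx / 2 := Fin.mk.inj_iff.mp heq
  have hword := word_eq_of_adj hxy (by rw [x.length_word, y.length_word, hdepth])
  have htwin : y.idx = x.idx + 1 - 2 * (x.idx % 2) := by have := idx_ne_of_adj hxy; omega
  apply hsel
  rw [pairTwins, dif_pos (htwin ▸ y.idx_lt)]
  congr 1
  exact TreeVert.ext htwin.symm hword

variable {f : TreeVert k → Sym2 (TreeVert k)}

def IsAboveSubtree (f : TreeVert k → Sym2 (TreeVert k)) (w : List (Fin 3))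
    (S : Finset (TreeVert k)) : Prop :=
  ∀ a ∈ S, ∀ y : TreeVert k, w <:+ y.word → (treeGraph k).Adj a y ∧ f a ≠ s(a, y)

theorem IsAboveSubtree.not_mem {w : List (Fin 3)} {S : Finset (TreeVert k)}
    (hS : IsAboveSubtree f w S) {x : TreeVert k} (hx : w <:+ x.word) : x ∉ S :=
  fun hxS => (hS x hxS x hx).1.ne rfl

theorem IsAboveSubtree.adj_and_selects_imp {w : List (Fin 3)} {S : Finset (TreeVert k)}
    (hS : IsAboveSubtree f w S) {x a : TreeVert k} (hx : w <:+ x.word) (ha : a ∈ S) :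
    (treeGraph k).Adj x a ∧ (f a = s(x, a) → f x = s(x, a)) :=
  ⟨(hS a ha x hx).1.symm, fun h => absurd (h.trans Sym2.eq_swap) (hS a ha x hx).2⟩

theorem IsAboveSubtree.cons {w : List (Fin 3)} {S : Finset (TreeVert k)}
    (hS : IsAboveSubtree f w S) (c : Fin 3) : IsAboveSubtree f (c :: w) S :=
  fun a ha y hy => hS a ha y ((List.suffix_cons c w).trans hy)

theorem IsAboveSubtree.insert_of_word_eq {w : List (Fin 3)} {c : Fin 3} {S : Finset (TreeVert k)}
    (hS : IsAboveSubtree f (c :: w) S) (hf : IsOneSelection (treeGraph k) f) {x : TreeVert k}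
    (hx : x.word = w) (hc : ¬ c :: w <:+ (Sym2.Mem.other (hf x)).word) :
    IsAboveSubtree f (c :: w) (insert x S) := by
  refine forall_mem_insert _ _ _ |>.mpr ⟨fun y hy => ⟨⟨?_, ?_⟩, fun hxy => ?_⟩, hS⟩
  · rintro rfl
    have := hy.length_le
    simp [hx] at this
  · exact Or.inl (hx ▸ (List.suffix_cons c w).trans hy)
  · rw [← Sym2.congr_right.mp ((Sym2.other_spec (hf x)).trans hxy)] at hy
    exact hc hy

/-- Descend the tree, choosing at each node a child whose subtree contains neither vertex selected
by the two vertices of the node. -/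
theorem exists_isAboveSubtree (hf : IsOneSelection (treeGraph k) f) :
    ∀ l, 2 * l ≤ k → ∃ w : List (Fin 3), w.length = l ∧ ∃ S : Finset (TreeVert k), #S = 2 * l ∧
      IsCoveredByTwoCliques (oneRemoved (treeGraph k) f) S ∧ IsAboveSubtree f w S
  | 0, _ => ⟨[], rfl, ∅, rfl, isCoveredByTwoCliques_empty, fun _ h => absurd h (notMem_empty _)⟩
  | l + 1, hl => by
    obtain ⟨w, hw, S, hcard, hcov, hS⟩ := exists_isAboveSubtree hf l (by omega)
    let u : TreeVert k := ⟨2 * l, w, by omega, by omega⟩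
    let v : TreeVert k := ⟨2 * l + 1, w, by omega, by omega⟩
    have huv : u ≠ v := fun h => by simpa [u, v] using congrArg TreeVert.idx h
    have hadj : (treeGraph k).Adj u v := ⟨huv, Or.inl (List.suffix_refl w)⟩
    have above : ∀ {x}, x.word = w → ∀ a ∈ S,
        (treeGraph k).Adj x a ∧ (f a = s(x, a) → f x = s(x, a)) :=
      fun hx _ ha => hS.adj_and_selects_imp (hx ▸ List.suffix_refl w) ha
    obtain ⟨c, hcu, hcv⟩ :=
      exists_cons_not_suffix w (Sym2.Mem.other (hf u)).word (Sym2.Mem.other (hf v)).word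
    refine ⟨c :: w, by simp [hw], insert u (insert v S), ?_, ?_,
      ((hS.cons c).insert_of_word_eq hf rfl hcv).insert_of_word_eq hf rfl hcu⟩
    · have huS : u ∉ S := hS.not_mem (List.suffix_refl w)
      have hvS : v ∉ S := hS.not_mem (List.suffix_refl w)
      rw [card_insert_of_notMem fun h => (mem_insert.mp h).elim huv huS,
        card_insert_of_notMem hvS, hcard]
      ring
    -- `u` goes in second if it selects the edge `uv`, otherwise `v` does.
    by_cases hsel : f u = s(u, v)
    · refine (hcov.insert_of_isOneSelection hf fun a ha _ => above rfl a ha)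
        |>.insert_of_isOneSelection hf fun a ha _ => ?_
      rcases mem_insert.mp ha with rfl | ha
      exacts [⟨hadj, fun _ => hsel⟩, above rfl a ha]
    · rw [insert_comm]
      refine (hcov.insert_of_isOneSelection hf fun a ha _ => above rfl a ha)
        |>.insert_of_isOneSelection hf fun a ha _ => ?_
      rcases mem_insert.mp ha with rfl | ha
      exacts [⟨hadj.symm, fun h => absurd (h.trans Sym2.eq_swap) hsel⟩, above rfl a ha]

theorem exists_isClique_oneRemoved (hf : IsOneSelection (treeGraph k) f) :
    ∃ K : Finset (TreeVert k), (oneRemoved (treeGraph k) f).IsClique (K : Set (TreeVert k)) ∧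
      (k + 1) / 2 ≤ #K := by
  obtain ⟨w, hw, S, hcard, hcov, hS⟩ := exists_isAboveSubtree hf (k / 2) (by omega)
  obtain ⟨T, hT, hcovT⟩ : ∃ T : Finset (TreeVert k),
      k ≤ #T ∧ IsCoveredByTwoCliques (oneRemoved (treeGraph k) f) T := by
    by_cases hk : k % 2 = 0
    · exact ⟨S, by omega, hcov⟩
    · let leaf : TreeVert k := ⟨k - 1, w, by omega, by omega⟩
      refine ⟨insert leaf S, ?_, hcov.insert_of_isOneSelection hf fun a ha _ =>
        hS.adj_and_selects_imp (List.suffix_refl w) ha⟩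
      rw [card_insert_of_notMem (hS.not_mem (List.suffix_refl w))]
      omega
  obtain ⟨K, hK, hKT⟩ := hcovT.exists_isClique
  exact ⟨K, hK, by omega⟩

theorem robustCliqueNum_eq_and_robustChromNum_eq_ceil_half :
    robustCliqueNum (treeGraph k) = (k + 1) / 2 ∧ robustChromNum (treeGraph k) = (k + 1) / 2 :=
  robustCliqueNum_eq_and_robustChromNum_eq (fun _ hf => exists_isClique_oneRemoved hf)
    ⟨pairTwins, isOneSelection_pairTwins, colorable_oneRemoved_pairTwins⟩

end treeGraph

theorem exists_intervalGraph_robust_half_general (k : ℕ) :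
    ∃ (n : ℕ) (G : SimpleGraph (Fin n)),
      IsIntervalGraph G ∧ G.cliqueNum = k ∧ chromNum G = k ∧
        robustCliqueNum G = (k + 1) / 2 ∧ robustChromNum G = (k + 1) / 2 := by
  let e := Iso.map (Finite.equivFin (TreeVert k)) (treeGraph k)
  obtain ⟨hω, hχ⟩ := treeGraph.cliqueNum_eq_and_chromNum_eq (k := k)
  obtain ⟨hω₁, hχ₁⟩ := treeGraph.robustCliqueNum_eq_and_robustChromNum_eq_ceil_half (k := k)
  exact ⟨_, _, e.isIntervalGraph treeGraph.isIntervalGraph, e.cliqueNum_eq.symm.trans hω,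
    e.chromNum_eq.symm.trans hχ, e.robustCliqueNum_eq.symm.trans hω₁,
    e.robustChromNum_eq.symm.trans hχ₁⟩

/-- For every `k ≥ 2` there is a finite interval graph `G` with
`ω(G) = χ(G) = k` and `ω₁(G) = χ₁(G) = ⌈k/2⌉`. -/
theorem exists_intervalGraph_robust_half (k : ℕ) (hk : 2 ≤ k) :
    ∃ (n : ℕ) (G : SimpleGraph (Fin n)),
      IsIntervalGraph G ∧ G.cliqueNum = k ∧ chromNum G = k ∧
        robustCliqueNum G = (k + 1) / 2 ∧ robustChromNum G = (k + 1) / 2 :=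
  exists_intervalGraph_robust_half_general k
end

section
/- Let 1 = n_1 ≤ n_2 ≤ … ≤ n_t be integers with t ≥ 2 and n_t ≥ 3. Then χ₁(K_{n_1,…,n_t}) = 1 + χ₁(K_{n_2,…,n_{t−1}}), where χ₁ of the complete multipartite graph with empty class list is 0. -/
open SimpleGraph

/-!
Write `K = K_{n_1,…,n_t}`, `x` for the vertex of the singleton class and `Λ` for the last class.
Upper bound: lift an optimal selection of the middle graph `K_{n_2,…,n_{t-1}}` and let every
vertex of `Λ` delete its edge to `x`; then `{x} ∪ Λ` is independent and takes one new colour.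

Lower bound: given a selection `f` and a `k`-colouring `C` of `K_f`, it suffices to find an
injection `φ` of the middle graph into `K` such that `C ∘ φ` misses a colour and adjacent middle
vertices with equal colours go to adjacent vertices: pulling `f` back along `φ` gives a selection
of the middle graph coloured by `C ∘ φ`. If some colour misses the middle, `φ` is the inclusion;
if a colour `β ≠ C x` has a single middle vertex, that vertex goes to `x`. Otherwise, since a
monochromatic triangle is deleted cyclically, the middle vertices of colour `C x` lie in one class
or are just two, and they are moved into `Λ`: by index (monotonicity), or onto two differently
coloured vertices of `Λ`, which exist because three vertices of `Λ` share their colour with at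
most one vertex outside `Λ`.
-/

section OneSelection

variable {V W : Type*} {G : SimpleGraph V} {f : V → Sym2 V}

theorem oneRemoved_adj {a b : V} :
    (oneRemoved G f).Adj a b ↔ G.Adj a b ∧ s(a, b) ∉ Set.range f :=
  deleteEdges_adj

theorem robustChromNum_le_of_colorable (hf : IsOneSelection G f) {m : ℕ}
    (h : (oneRemoved G f).Colorable m) : robustChromNum G ≤ m :=
  (Nat.sInf_le ⟨f, hf, rfl⟩ : robustChromNum G ≤ chromNum (oneRemoved G f)).trans
    (Nat.sInf_le h)

theorem exists_colorable_robustChromNum [Fintype V] (G : SimpleGraph V) :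
    ∃ f, IsOneSelection G f ∧ (oneRemoved G f).Colorable (robustChromNum G) := by
  obtain ⟨f, hf, hχ⟩ := Nat.sInf_mem (s := {m | ∃ f, IsOneSelection G f ∧
    chromNum (oneRemoved G f) = m}) ⟨_, fun v => s(v, v), fun v => Sym2.mem_mk_left v v, rfl⟩
  refine ⟨f, hf, ?_⟩
  rw [robustChromNum, ← hχ]
  exact Nat.sInf_mem (s := {n | (oneRemoved G f).Colorable n})
    ⟨_, (oneRemoved G f).colorable_of_fintype⟩

namespace IsOneSelection

variable (hf : IsOneSelection G f)
include hf

section Coloring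

variable {β : Type*} (C : (oneRemoved G f).Coloring β)

theorem selects_of_color_eq {a b : V} (hab : G.Adj a b) (hC : C a = C b) :
    f a = s(a, b) ∨ f b = s(a, b) := by
  have hnot : ¬ (oneRemoved G f).Adj a b := fun h => C.valid h hC
  rw [oneRemoved_adj, not_and_not_right] at hnot
  obtain ⟨z, hz⟩ := hnot hab
  rcases Sym2.mem_iff.mp (hz ▸ hf z) with rfl | rfl
  exacts [Or.inl hz, Or.inr hz]

/-- The three edges of a monochromatic triangle must be deleted by its three vertices, one each. -/
theorem triangle_cyclic {a b c : V} (hab : G.Adj a b) (hbc : G.Adj b c) (hca : G.Adj c a)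
    (hb : C b = C a) (hc : C c = C a) :
    f a = s(a, b) ∧ f b = s(b, c) ∨ f a = s(a, c) ∧ f c = s(c, b) := by
  have := hab.ne; have := hbc.ne; have := hca.ne
  have := hab.ne'; have := hbc.ne'; have := hca.ne'
  have eab := hf.selects_of_color_eq C hab hb.symm
  have ebc := hf.selects_of_color_eq C hbc (hb.trans hc.symm)
  have eca := hf.selects_of_color_eq C hca hc
  rcases eab with h | h <;> simp_all

theorem eq_of_triangles {a b c d : V} (hab : G.Adj a b) (hbc : G.Adj b c) (hca : G.Adj c a)
    (hbd : G.Adj b d) (hda : G.Adj d a) (hb : C b = C a) (hc : C c = C a) (hd : C d = C a) :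
    c = d := by
  have := hab.ne; have := hbc.ne; have := hbd.ne; have := hca.ne'
  rcases hf.triangle_cyclic C hab hbc hca hb hc with ⟨h₁, h₂⟩ | ⟨h₁, h₂⟩ <;>
  rcases hf.triangle_cyclic C hab hbd hda hb hd with ⟨h₃, h₄⟩ | ⟨h₃, h₄⟩ <;>
  simp_all

/-- Each `qᵢ` deletes at most one of its three edges to the `vⱼ`, so some `vⱼ` deletes both
`vⱼ q₁` and `vⱼ q₂`. -/
theorem eq_of_three_common_neighbors {v : Fin 3 → V} (hv : Function.Injective v) {q₁ q₂ : V}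
    (hadj : ∀ i, G.Adj q₁ (v i) ∧ G.Adj q₂ (v i)) (hC : ∀ i, C (v i) = C q₁ ∧ C (v i) = C q₂) :
    q₁ = q₂ := by
  have selects_most (q : V) (hq : ∀ i, G.Adj q (v i) ∧ C q = C (v i)) (i j : Fin 3) (hij : i ≠ j) :
      f (v i) = s(q, v i) ∨ f (v j) = s(q, v j) := by
    rcases hf.selects_of_color_eq C (hq i).1 (hq i).2 with hi | hi
    · rcases hf.selects_of_color_eq C (hq j).1 (hq j).2 with hj | hj
      · exact absurd (hv (Sym2.congr_right.mp (hi.symm.trans hj))) hij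
      · exact Or.inr hj
    · exact Or.inl hi
  have h₁ := selects_most q₁ fun i => ⟨(hadj i).1, (hC i).1.symm⟩
  have h₂ := selects_most q₂ fun i => ⟨(hadj i).2, (hC i).2.symm⟩
  by_contra hne
  have hboth (i : Fin 3) (e₁ : f (v i) = s(q₁, v i)) (e₂ : f (v i) = s(q₂, v i)) : False :=
    hne (Sym2.congr_left.mp (e₁.symm.trans e₂))
  have := hboth 0; have := hboth 1; have := hboth 2
  have := h₁ 0 1 (by decide); have := h₁ 0 2 (by decide); have := h₁ 1 2 (by decide)
  have := h₂ 0 1 (by decide); have := h₂ 0 2 (by decide); have := h₂ 1 2 (by decide)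
  tauto

end Coloring

theorem robustChromNum_le_pred {k : ℕ} (C : (oneRemoved G f).Coloring (Fin k))
    (H : SimpleGraph W) {φ : W → V} (hφ : Function.Injective φ) {γ : Fin k}
    (hγ : ∀ w, C (φ w) ≠ γ)
    (hadj : ∀ ⦃w₁ w₂⦄, H.Adj w₁ w₂ → C (φ w₁) = C (φ w₂) → G.Adj (φ w₁) (φ w₂)) :
    robustChromNum H ≤ k - 1 := by
  -- `Function.extend φ id fun _ => w` is a left inverse of `φ`; the default `w` is never used
  have hψ (w w' : W) : Function.extend φ id (fun _ => w) (φ w') = w' := hφ.extend_apply _ _ _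
  let g (w : W) : Sym2 W := Sym2.map (Function.extend φ id fun _ => w) (f (φ w))
  have hg : IsOneSelection H g := fun w => Sym2.mem_map.mpr ⟨φ w, hf _, hψ w w⟩
  refine robustChromNum_le_of_colorable hg ?_
  have hcard : Fintype.card {c : Fin k // c ≠ γ} = k - 1 := by
    simp [Fintype.card_subtype_compl]
  refine hcard ▸ (Coloring.mk (fun w => ⟨C (φ w), hγ w⟩) ?_).colorable
  intro w₁ w₂ h hC
  obtain ⟨hH, hnot⟩ := oneRemoved_adj.mp h
  have hC' : C (φ w₁) = C (φ w₂) := congrArg Subtype.val hC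
  apply hnot
  rcases hf.selects_of_color_eq C (hadj hH hC') hC' with h₁ | h₁
  · exact ⟨w₁, by simp [g, h₁, hψ]⟩
  · exact ⟨w₂, by simp [g, h₁, hψ]⟩

end IsOneSelection

theorem robustChromNum_le_add_one_of_star [Fintype W] {H : SimpleGraph W} {ι : W → V}
    (hι : Function.Injective ι) (hadj : ∀ ⦃w₁ w₂⦄, G.Adj (ι w₁) (ι w₂) → H.Adj w₁ w₂) (x : V)
    (hx : ∀ ⦃u v⦄, G.Adj u v → u ∉ Set.range ι → v ∉ Set.range ι → u = x ∨ v = x) :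
    robustChromNum G ≤ robustChromNum H + 1 := by
  obtain ⟨g, hg, ⟨D⟩⟩ := exists_colorable_robustChromNum H
  let f := Function.extend ι (fun w => Sym2.map ι (g w)) (fun u => s(u, x))
  let c := Function.extend ι (fun w => (D w).succ) (fun _ => 0)
  have hf_ι (w : W) : f (ι w) = Sym2.map ι (g w) := hι.extend_apply _ _ _
  have hf_out (u : V) (hu : u ∉ Set.range ι) : f u = s(u, x) := Function.extend_apply' _ _ _ hu
  have hc_ι (w : W) : c (ι w) = (D w).succ := hι.extend_apply _ _ _
  have hc_out (u : V) (hu : u ∉ Set.range ι) : c u = 0 := Function.extend_apply' _ _ _ hu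
  have hf : IsOneSelection G f := by
    intro u
    by_cases hu : u ∈ Set.range ι
    · obtain ⟨w, rfl⟩ := hu
      exact hf_ι w ▸ Sym2.mem_map.mpr ⟨w, hg w, rfl⟩
    · exact hf_out u hu ▸ Sym2.mem_mk_left u x
  refine robustChromNum_le_of_colorable hf ⟨Coloring.mk c ?_⟩
  intro u v h hc
  obtain ⟨hG, hnot⟩ := oneRemoved_adj.mp h
  apply hnot
  by_cases hu : u ∈ Set.range ι <;> by_cases hv : v ∈ Set.range ι
  · obtain ⟨w₁, rfl⟩ := hu
    obtain ⟨w₂, rfl⟩ := hv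
    rw [hc_ι, hc_ι, Fin.succ_inj] at hc
    rcases hg.selects_of_color_eq D (hadj hG) hc with h₁ | h₁
    · exact ⟨ι w₁, by rw [hf_ι, h₁, Sym2.map_mk]⟩
    · exact ⟨ι w₂, by rw [hf_ι, h₁, Sym2.map_mk]⟩
  · obtain ⟨w, rfl⟩ := hu
    exact absurd (hc_out v hv ▸ hc_ι w ▸ hc) (Fin.succ_ne_zero _)
  · obtain ⟨w, rfl⟩ := hv
    exact absurd (hc_out u hu ▸ hc_ι w ▸ hc.symm) (Fin.succ_ne_zero _)
  · rcases hx hG hu hv with rfl | rfl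
    · exact ⟨v, by rw [hf_out v hv, Sym2.eq_swap]⟩
    · exact ⟨u, hf_out u hu⟩

end OneSelection

section CompleteMultipartite

variable {t : ℕ} {n : ℕ → ℕ}

abbrev multipartite (t : ℕ) (n : ℕ → ℕ) : SimpleGraph (Σ i : Fin t, Fin (n i)) :=
  completeMultipartiteGraph fun i : Fin t => Fin (n i)

abbrev middleGraph (t : ℕ) (n : ℕ → ℕ) :
    SimpleGraph (Σ i : Fin (t - 2), Fin (n (i + 1))) :=
  multipartite (t - 2) fun i => n (i + 1)

theorem multipartite_adj {a b : Σ i : Fin t, Fin (n i)} :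
    (multipartite t n).Adj a b ↔ (a.1 : ℕ) ≠ b.1 :=
  Fin.val_ne_iff.symm

theorem sigma_fin_ext {a b : Σ i : Fin t, Fin (n i)} (h₁ : (a.1 : ℕ) = b.1)
    (h₂ : (a.2 : ℕ) = b.2) : a = b :=
  Sigma.ext (Fin.ext h₁) ((Fin.heq_ext_iff (congrArg n h₁)).mpr h₂)

/-- Classes are numbered from `0` (the paper's `V_{i+1}` is class `i`, of size `n i`), and class
`i` of the middle graph `K_{n_2,…,n_{t-1}}` is class `i + 1` of `K_{n_1,…,n_t}`. -/
def middle (w : Σ i : Fin (t - 2), Fin (n (i + 1))) : Σ i : Fin t, Fin (n i) :=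
  ⟨⟨w.1 + 1, by omega⟩, w.2⟩

@[simp]
theorem middle_fst (w : Σ i : Fin (t - 2), Fin (n (i + 1))) :
    ((middle w).1 : ℕ) = w.1 + 1 :=
  rfl

theorem middle_fst_lt (w : Σ i : Fin (t - 2), Fin (n (i + 1))) :
    ((middle w).1 : ℕ) < t - 1 := by
  have := w.1.isLt
  simp only [middle_fst]
  omega

theorem middle_injective : Function.Injective (middle (t := t) (n := n)) := by
  intro w₁ w₂ h
  have h₁ : (w₁.1 : ℕ) = w₂.1 := by simpa using congrArg (fun v => (v.1 : ℕ)) h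
  exact sigma_fin_ext (n := fun i => n (i + 1)) h₁ (congrArg (fun v => (v.2 : ℕ)) h)

theorem multipartite_adj_middle {w₁ w₂ : Σ i : Fin (t - 2), Fin (n (i + 1))} :
    (multipartite t n).Adj (middle w₁) (middle w₂) ↔
      (middleGraph t n).Adj w₁ w₂ := by
  simp only [multipartite_adj, middle_fst]
  omega

theorem mem_range_middle {u : Σ i : Fin t, Fin (n i)} :
    u ∈ Set.range middle ↔ 0 < (u.1 : ℕ) ∧ (u.1 : ℕ) < t - 1 := by
  refine ⟨fun ⟨w, hw⟩ => hw ▸ ⟨by simp, middle_fst_lt w⟩, fun ⟨h₀, h₁⟩ => ?_⟩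
  refine ⟨⟨⟨u.1 - 1, by omega⟩, ⟨u.2, by have := u.2.isLt; rwa [Nat.sub_add_cancel h₀]⟩⟩, ?_⟩
  exact sigma_fin_ext (by simp; omega) rfl

end CompleteMultipartite

section LowerBound

variable {t : ℕ} {n : ℕ → ℕ}
  {f : (Σ i : Fin t, Fin (n i)) → Sym2 (Σ i : Fin t, Fin (n i))}
  (hf : IsOneSelection (multipartite t n) f) {k : ℕ}
  (C : (oneRemoved (multipartite t n) f).Coloring (Fin k))
include hf

theorem robustChromNum_middleGraph_le_of_apex {x : Σ i : Fin t, Fin (n i)} (hx : (x.1 : ℕ) = 0)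
    {β : Fin k} (hβ : C x ≠ β) {q : Σ i : Fin (t - 2), Fin (n (i + 1))}
    (hq : ∀ w, C (middle w) = β → w = q) :
    robustChromNum (middleGraph t n) ≤ k - 1 := by
  let φ (w : Σ i : Fin (t - 2), Fin (n (i + 1))) : Σ i : Fin t, Fin (n i) :=
    if w = q then x else middle w
  have hφ w : ((φ w).1 : ℕ) = if w = q then 0 else (w.1 : ℕ) + 1 := by
    unfold φ; split_ifs <;> simp [hx]
  refine hf.robustChromNum_le_pred C _ (φ := φ) (fun w₁ w₂ h => ?_) (γ := β) (fun w => ?_)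
    (fun w₁ w₂ hw _ => ?_)
  · have h' := congrArg (fun v => (v.1 : ℕ)) h
    simp only [hφ] at h'
    by_cases h₁ : w₁ = q <;> by_cases h₂ : w₂ = q
    · exact h₁.trans h₂.symm
    · simp [h₁, h₂] at h'
    · simp [h₁, h₂] at h'
    · exact middle_injective (by simpa [φ, h₁, h₂] using h)
  · unfold φ
    split_ifs with h
    exacts [hβ, fun hw => h (hq w hw)]
  · rw [multipartite_adj] at hw ⊢
    rw [hφ, hφ]
    split_ifs with h₁ h₂ <;> first | omega | exact fun _ => hw (by rw [h₁, h₂])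

theorem eq_or_eq_of_color_eq_apex {x a b c : Σ i : Fin t, Fin (n i)} (hx : (x.1 : ℕ) = 0)
    (ha : (a.1 : ℕ) ≠ 0) (hb : (b.1 : ℕ) ≠ 0) (hc : (c.1 : ℕ) ≠ 0) (hab : (a.1 : ℕ) ≠ b.1)
    (hCa : C a = C x) (hCb : C b = C x) (hCc : C c = C x) : c = a ∨ c = b := by
  have adj {u v : Σ i : Fin t, Fin (n i)} (h : (u.1 : ℕ) ≠ v.1) : (multipartite t n).Adj u v :=
    multipartite_adj.mpr h
  by_contra! hne
  by_cases hac : (a.1 : ℕ) = c.1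
  · exact hne.1 (hf.eq_of_triangles C (adj (by omega)) (adj hab.symm) (adj (by omega))
      (adj (by omega)) (adj (by omega)) hCb hCa hCc).symm
  · exact hne.2 (hf.eq_of_triangles C (adj (by omega)) (adj hab) (adj (by omega))
      (adj hac) (adj (by omega)) hCa hCb hCc).symm

theorem exists_last_color_ne (hlast : 3 ≤ n (t - 1)) {q₁ q₂ : Σ i : Fin t, Fin (n i)}
    (hne : q₁ ≠ q₂) (h₁ : (q₁.1 : ℕ) ≠ t - 1) (h₂ : (q₂.1 : ℕ) ≠ t - 1) (hC : C q₁ = C q₂) :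
    ∃ v : Σ i : Fin t, Fin (n i), (v.1 : ℕ) = t - 1 ∧ C v ≠ C q₁ := by
  have ht : 0 < t := q₁.1.pos
  let v (j : Fin 3) : Σ i : Fin t, Fin (n i) :=
    ⟨⟨t - 1, by omega⟩, ⟨j, show (j : ℕ) < n (t - 1) by omega⟩⟩
  by_contra! hmono
  refine hne (hf.eq_of_three_common_neighbors C (v := v) ?_ (fun j => ?_) (fun j => ?_))
  · exact fun j₁ j₂ h => Fin.ext (congrArg (fun u => (u.2 : ℕ)) h)
  · exact ⟨multipartite_adj.mpr h₁, multipartite_adj.mpr h₂⟩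
  · exact ⟨hmono _ rfl, (hmono _ rfl).trans hC⟩

theorem robustChromNum_middleGraph_le_of_relocate (α : Fin k)
    (ρ : (Σ i : Fin (t - 2), Fin (n (i + 1))) → Σ i : Fin t, Fin (n i))
    (hρ_last : ∀ w, C (middle w) = α → ((ρ w).1 : ℕ) = t - 1)
    (hρ_color : ∀ w, C (middle w) = α → C (ρ w) ≠ α)
    (hρ_inj : ∀ w₁ w₂, C (middle w₁) = α → C (middle w₂) = α → ρ w₁ = ρ w₂ → w₁ = w₂)
    (hρ_adj : ∀ w₁ w₂, C (middle w₁) = α → C (middle w₂) = α → (w₁.1 : ℕ) ≠ w₂.1 →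
      C (ρ w₁) ≠ C (ρ w₂)) :
    robustChromNum (middleGraph t n) ≤ k - 1 := by
  let φ (w : Σ i : Fin (t - 2), Fin (n (i + 1))) : Σ i : Fin t, Fin (n i) :=
    if C (middle w) = α then ρ w else middle w
  have fst_ne (w w' : Σ i : Fin (t - 2), Fin (n (i + 1))) (hw : C (middle w) = α) :
      ((ρ w).1 : ℕ) ≠ (middle w').1 := by
    have := middle_fst_lt w'
    have := hρ_last w hw
    omega
  refine hf.robustChromNum_le_pred C _ (φ := φ) (fun w₁ w₂ h => ?_) (γ := α) (fun w => ?_)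
    (fun w₁ w₂ hw hC => ?_)
  · have h' := congrArg (fun v => (v.1 : ℕ)) h
    by_cases h₁ : C (middle w₁) = α <;> by_cases h₂ : C (middle w₂) = α <;>
      simp only [φ, h₁, h₂, if_true, if_false] at h h'
    · exact hρ_inj _ _ h₁ h₂ h
    · exact absurd h' (fst_ne _ _ h₁)
    · exact absurd h'.symm (fst_ne _ _ h₂)
    · exact middle_injective h
  · by_cases h : C (middle w) = α <;> simp only [φ, h, if_true, if_false]
    exacts [hρ_color w h, h]
  · rw [multipartite_adj] at hw ⊢
    by_cases h₁ : C (middle w₁) = α <;> by_cases h₂ : C (middle w₂) = α <;>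
      simp only [φ, h₁, h₂, if_true, if_false] at hC ⊢
    · exact absurd hC (hρ_adj _ _ h₁ h₂ hw)
    · exact fst_ne _ _ h₁
    · exact (fst_ne _ _ h₂).symm
    · simpa using hw

theorem robustChromNum_middleGraph_le_of_two_classes (ht : 2 ≤ t) (hlast : 3 ≤ n (t - 1))
    {x : Σ i : Fin t, Fin (n i)} (hx : (x.1 : ℕ) = 0)
    (hcover : ∀ β ≠ C x, ∃ q₁ q₂, q₁ ≠ q₂ ∧ C (middle q₁) = β ∧ C (middle q₂) = β)
    {u₁ u₂ : Σ i : Fin (t - 2), Fin (n (i + 1))} (hu₁ : C (middle u₁) = C x)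
    (hu₂ : C (middle u₂) = C x) (hu : (u₁.1 : ℕ) ≠ u₂.1) :
    robustChromNum (middleGraph t n) ≤ k - 1 := by
  have hpair c (hc : (c.1 : ℕ) ≠ 0) (hC : C c = C x) : c = middle u₁ ∨ c = middle u₂ :=
    eq_or_eq_of_color_eq_apex hf C hx (by simp) (by simp) hc (by simpa using hu) hu₁ hu₂ hC
  have hT w (hw : C (middle w) = C x) : w = u₁ ∨ w = u₂ :=
    (hpair _ (by simp) hw).imp (middle_injective ·) (middle_injective ·)
  have hlast_color (v : Σ i : Fin t, Fin (n i)) (hv : (v.1 : ℕ) = t - 1) : C v ≠ C x := by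
    intro hC
    rcases hpair v (by omega) hC with rfl | rfl
    exacts [(middle_fst_lt u₁).ne hv, (middle_fst_lt u₂).ne hv]
  let v₁ : Σ i : Fin t, Fin (n i) := ⟨⟨t - 1, by omega⟩, ⟨0, show 0 < n (t - 1) by omega⟩⟩
  obtain ⟨q₁, q₂, hq, hq₁, hq₂⟩ := hcover (C v₁) (hlast_color v₁ rfl)
  obtain ⟨v₂, hv₂, hv₂C⟩ := exists_last_color_ne hf C hlast (middle_injective.ne hq)
    (middle_fst_lt q₁).ne (middle_fst_lt q₂).ne (hq₁.trans hq₂.symm)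
  rw [hq₁] at hv₂C
  have hu₂₁ : u₂ ≠ u₁ := fun h => hu (by rw [h])
  let ρ (w : Σ i : Fin (t - 2), Fin (n (i + 1))) : Σ i : Fin t, Fin (n i) :=
    if w = u₁ then v₁ else v₂
  have hρ w : ρ w = v₁ ∨ ρ w = v₂ := by
    unfold ρ; split_ifs <;> simp
  have hρ₁₂ : C (ρ u₁) ≠ C (ρ u₂) := by
    simpa [ρ, hu₂₁.symm, eq_comm] using hv₂C
  refine robustChromNum_middleGraph_le_of_relocate hf C (C x) ρ (fun w _ => ?_) (fun w _ => ?_)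
    (fun w₁ w₂ h₁ h₂ h => ?_) (fun w₁ w₂ h₁ h₂ hw => ?_)
  · rcases hρ w with h | h <;> rw [h]
    exact hv₂
  · rcases hρ w with h | h <;> rw [h]
    exacts [hlast_color v₁ rfl, hlast_color v₂ hv₂]
  · rcases hT w₁ h₁ with rfl | rfl <;> rcases hT w₂ h₂ with rfl | rfl
    exacts [rfl, absurd (congrArg C h) hρ₁₂, absurd (congrArg C h).symm hρ₁₂, rfl]
  · rcases hT w₁ h₁ with rfl | rfl <;> rcases hT w₂ h₂ with rfl | rfl
    exacts [absurd rfl hw, hρ₁₂, hρ₁₂.symm, absurd rfl hw]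

theorem robustChromNum_middleGraph_le_of_one_class (ht : 2 ≤ t)
    (hmono : ∀ i j, i ≤ j → j < t → n i ≤ n j) (hlast : 3 ≤ n (t - 1))
    {x : Σ i : Fin t, Fin (n i)} (hx : (x.1 : ℕ) = 0)
    {w₀ : Σ i : Fin (t - 2), Fin (n (i + 1))} (hw₀ : C (middle w₀) = C x)
    (hclass : ∀ w₁ w₂, C (middle w₁) = C x → C (middle w₂) = C x → (w₁.1 : ℕ) = w₂.1) :
    robustChromNum (middleGraph t n) ≤ k - 1 := by
  by_cases hΛ : ∃ v : Σ i : Fin t, Fin (n i), (v.1 : ℕ) = t - 1 ∧ C v = C x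
  · obtain ⟨v, hv, hvC⟩ := hΛ
    have hT w (hw : C (middle w) = C x) : w = w₀ := by
      rcases eq_or_eq_of_color_eq_apex hf C hx (by simp) (by omega) (by simp)
        (by have := middle_fst_lt w₀; omega) hw₀ hvC hw with h | h
      · exact middle_injective h
      · exact absurd (h ▸ hv) (middle_fst_lt w).ne
    obtain ⟨v', hv', hv'C⟩ := exists_last_color_ne hf C hlast
      (fun h => by simpa [hx] using congrArg (fun u => (u.1 : ℕ)) h) (by omega)
      (middle_fst_lt w₀).ne hw₀.symm
    exact robustChromNum_middleGraph_le_of_relocate hf C (C x) (fun _ => v') (fun _ _ => hv')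
      (fun _ _ => hv'C) (fun w₁ w₂ h₁ h₂ _ => (hT w₁ h₁).trans (hT w₂ h₂).symm)
      (fun w₁ w₂ h₁ h₂ hw => absurd (hclass w₁ w₂ h₁ h₂) hw)
  · push Not at hΛ
    -- by monotonicity the middle class of colour `C x` moves into the last class index by index
    let ρ (w : Σ i : Fin (t - 2), Fin (n (i + 1))) : Σ i : Fin t, Fin (n i) :=
      ⟨⟨t - 1, by omega⟩, ⟨w.2, show (w.2 : ℕ) < n (t - 1) from
        w.2.isLt.trans_le (hmono _ _ (by have := w.1.isLt; omega) (by omega))⟩⟩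
    refine robustChromNum_middleGraph_le_of_relocate hf C (C x) ρ (fun _ _ => rfl)
      (fun w _ => hΛ (ρ w) rfl) (fun w₁ w₂ h₁ h₂ h => ?_)
      (fun w₁ w₂ h₁ h₂ hw => absurd (hclass w₁ w₂ h₁ h₂) hw)
    exact sigma_fin_ext (n := fun i => n (i + 1)) (hclass w₁ w₂ h₁ h₂)
      (congrArg (fun u => (u.2 : ℕ)) h)

end LowerBound

theorem robustChromNum_middleGraph_add_one_le {t : ℕ} {n : ℕ → ℕ} (ht : 2 ≤ t) (h0 : 0 < n 0)
    (hmono : ∀ i j, i ≤ j → j < t → n i ≤ n j) (hlast : 3 ≤ n (t - 1)) :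
    robustChromNum (middleGraph t n) + 1 ≤ robustChromNum (multipartite t n) := by
  obtain ⟨f, hf, ⟨C⟩⟩ := exists_colorable_robustChromNum (multipartite t n)
  let x : Σ i : Fin t, Fin (n i) := ⟨⟨0, by omega⟩, ⟨0, h0⟩⟩
  have hx : (x.1 : ℕ) = 0 := rfl
  have hk := (C x).pos
  suffices robustChromNum (middleGraph t n) ≤ robustChromNum (multipartite t n) - 1 by omega
  by_cases hmiss : ∃ γ, ∀ w, C (middle w) ≠ γ
  · obtain ⟨γ, hγ⟩ := hmiss
    exact hf.robustChromNum_le_pred C _ middle_injective hγ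
      fun _ _ h _ => multipartite_adj_middle.mpr h
  push Not at hmiss
  by_cases hsingle : ∃ β ≠ C x, ∃ q, ∀ w, C (middle w) = β → w = q
  · obtain ⟨β, hβ, q, hq⟩ := hsingle
    exact robustChromNum_middleGraph_le_of_apex hf C hx hβ.symm hq
  push Not at hsingle
  by_cases hspread : ∃ u₁ u₂, C (middle u₁) = C x ∧ C (middle u₂) = C x ∧ (u₁.1 : ℕ) ≠ u₂.1
  · obtain ⟨u₁, u₂, h₁, h₂, hu⟩ := hspread
    refine robustChromNum_middleGraph_le_of_two_classes hf C ht hlast hx (fun β hβ => ?_) h₁ h₂ hu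
    obtain ⟨q₁, hq₁⟩ := hmiss β
    obtain ⟨q₂, hq₂, hne⟩ := hsingle β hβ q₁
    exact ⟨q₁, q₂, hne.symm, hq₁, hq₂⟩
  push Not at hspread
  obtain ⟨w₀, hw₀⟩ := hmiss (C x)
  exact robustChromNum_middleGraph_le_of_one_class hf C ht hmono hlast hx hw₀ hspread

theorem robustChromNum_multipartite_le {t : ℕ} {n : ℕ → ℕ} (ht : 0 < t) (hfirst : n 0 = 1) :
    robustChromNum (multipartite t n) ≤ robustChromNum (middleGraph t n) + 1 := by
  let x : Σ i : Fin t, Fin (n i) := ⟨⟨0, ht⟩, ⟨0, show 0 < n 0 by omega⟩⟩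
  have eq_x (u : Σ i : Fin t, Fin (n i)) (hu : (u.1 : ℕ) = 0) : u = x := by
    have := u.2.isLt
    exact sigma_fin_ext hu (by simp [x, hu, hfirst] at this ⊢; omega)
  refine robustChromNum_le_add_one_of_star middle_injective
    (fun _ _ h => multipartite_adj_middle.mp h) x (fun u v huv hu hv => ?_)
  rw [mem_range_middle] at hu hv
  rw [multipartite_adj] at huv
  have := u.1.isLt
  have := v.1.isLt
  by_cases hu0 : (u.1 : ℕ) = 0
  · exact Or.inl (eq_x u hu0)
  · exact Or.inr (eq_x v (by omega))

theorem robustChromNum_completeMultipartite_recursion_first_one_general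
    (t : ℕ) (n : ℕ → ℕ) (ht : 2 ≤ t)
    (hfirst : n 0 = 1)
    (hmono : ∀ i j, i ≤ j → j < t → n i ≤ n j)
    (hlast : 3 ≤ n (t - 1)) :
    robustChromNum (completeMultipartiteGraph (fun i : Fin t => Fin (n i)))
      = 1 + robustChromNum (completeMultipartiteGraph
          (fun i : Fin (t - 2) => Fin (n ((i : ℕ) + 1)))) := by
  have hlower := robustChromNum_middleGraph_add_one_le ht (by omega) hmono hlast
  have hupper := robustChromNum_multipartite_le (by omega : 0 < t) hfirst
  change robustChromNum (multipartite t n) = 1 + robustChromNum (middleGraph t n)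
  omega

/-- If `1 = n 0 ≤ … ≤ n (t-1)` with `t ≥ 2` and `n (t-1) ≥ 3`, then
`χ₁(K_{n_1,…,n_t}) = 1 + χ₁(K_{n_2,…,n_{t-1}})`. -/
theorem robustChromNum_completeMultipartite_recursion_first_one
    (t : ℕ) (n : ℕ → ℕ) (ht : 2 ≤ t)
    (hfirst : n 0 = 1)
    (hpos : ∀ i, i < t → 1 ≤ n i)
    (hmono : ∀ i j, i ≤ j → j < t → n i ≤ n j)
    (hlast : 3 ≤ n (t - 1)) :
    robustChromNum (completeMultipartiteGraph (fun i : Fin t => Fin (n i)))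
      = 1 + robustChromNum (completeMultipartiteGraph
          (fun i : Fin (t - 2) => Fin (n ((i : ℕ) + 1)))) :=
  robustChromNum_completeMultipartite_recursion_first_one_general t n ht hfirst hmono hlast
end

section
/- Let k ≥ 2 and n ≥ 8k² be integers, and let 𝓕 be a family of k-element subsets of {1, …, n} that is robust independent in the Kneser graph KG(n, k). If for every x ∈ {1, …, n} there exist at least two sets F, G ∈ 𝓕 with x ∉ F and x ∉ G, then |𝓕| ≤ 8k·C(n−2, k−2). -/
open SimpleGraph

/-!
Fix a 1-selection witnessing robust independence: every disjoint pair in `𝓕` is the pair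
selected by one of its two members, so every subfamily spans at most as many disjoint pairs as
it has members. Greedily, this yields an intersecting subfamily containing at least a third of
`𝓕`; it also bounds the degree of every point by `2k·C(n-2, k-2) + 2`, because two members
missing `x` have at most two common disjoint partners. An intersecting family is either a star,
bounded by a degree, or has covering number `c ≥ 2` and then at most
`c·k^(c-1)·C(n-c, k-c) ≤ 2k·C(n-2, k-2)` members once `n ≥ 8k²`. For `k = 2` this loses too
much, and one counts instead around a member with at most two disjoint partners.
-/

open Finset

theorem Sym2.card_filter_eq_mk_le_one {V : Type*} [DecidableEq V] (f : V → Sym2 V) (u : V)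
    (T : Finset V) : #{v ∈ T | f u = s(u, v)} ≤ 1 :=
  card_le_one.2 fun _ hv _ hw =>
    Sym2.congr_right.1 ((mem_filter.1 hv).2.symm.trans (mem_filter.1 hw).2)

namespace IsRobustIndep

variable {V : Type*} {G : SimpleGraph V}

theorem mono {U W : Set V} (h : IsRobustIndep G U) (hWU : W ⊆ U) : IsRobustIndep G W :=
  let ⟨f, hf, hU⟩ := h
  ⟨f, hf, Set.Pairwise.mono hWU hU⟩

theorem exists_selection {U : Set V} (h : IsRobustIndep G U) :
    ∃ f : V → Sym2 V, ∀ ⦃u⦄, u ∈ U → ∀ ⦃v⦄, v ∈ U → G.Adj u v →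
      f u = s(u, v) ∨ f v = s(u, v) := by
  obtain ⟨f, hsel, hU⟩ := h
  refine ⟨f, fun u hu v hv huv => ?_⟩
  have hdel : s(u, v) ∈ Set.range f := by
    by_contra hnot
    exact hU hu hv huv.ne (SimpleGraph.deleteEdges_adj.2 ⟨huv, hnot⟩)
  obtain ⟨w, hw⟩ := hdel
  have hwmem : w ∈ s(u, v) := hw ▸ hsel w
  rcases Sym2.mem_iff.1 hwmem with rfl | rfl
  · exact Or.inl hw
  · exact Or.inr hw

variable [DecidableEq V] [DecidableRel G.Adj] {S : Finset V}

theorem sum_card_adj_le (h : IsRobustIndep G ↑S) :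
    ∑ u ∈ S, #{v ∈ S | G.Adj u v} ≤ 2 * #S := by
  obtain ⟨f, hf⟩ := h.exists_selection
  have hsplit : ∀ u ∈ S, #{v ∈ S | G.Adj u v} ≤ 1 + #{v ∈ S | f v = s(v, u)} := by
    intro u hu
    calc #{v ∈ S | G.Adj u v}
        ≤ #({v ∈ S | f u = s(u, v)} ∪ {v ∈ S | f v = s(v, u)}) := by
          refine card_le_card fun v hv => ?_
          obtain ⟨hvS, huv⟩ := mem_filter.1 hv
          rcases hf hu hvS huv with h | h
          · exact mem_union_left _ (mem_filter.2 ⟨hvS, h⟩)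
          · exact mem_union_right _ (mem_filter.2 ⟨hvS, h.trans Sym2.eq_swap⟩)
      _ ≤ 1 + #{v ∈ S | f v = s(v, u)} :=
          (card_union_le _ _).trans (Nat.add_le_add_right (Sym2.card_filter_eq_mk_le_one f u S) _)
  calc ∑ u ∈ S, #{v ∈ S | G.Adj u v}
      ≤ ∑ u ∈ S, (1 + #{v ∈ S | f v = s(v, u)}) := sum_le_sum hsplit
    _ = #S + ∑ v ∈ S, #{u ∈ S | f v = s(v, u)} := by
        rw [sum_add_distrib, sum_const, smul_eq_mul, mul_one]
        congr 1
        exact sum_card_bipartiteAbove_eq_sum_card_bipartiteBelow (fun u v => f v = s(v, u))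
    _ ≤ #S + ∑ _v ∈ S, 1 := by gcongr with v; exact Sym2.card_filter_eq_mk_le_one f v S
    _ = 2 * #S := by rw [sum_const, smul_eq_mul, mul_one]; ring

theorem exists_card_adj_le_two (h : IsRobustIndep G ↑S) (hS : S.Nonempty) :
    ∃ u ∈ S, #{v ∈ S | G.Adj u v} ≤ 2 :=
  exists_le_of_sum_le hS (by simpa [mul_comm] using h.sum_card_adj_le)

theorem exists_isIndepSet (h : IsRobustIndep G ↑S) :
    ∃ I ⊆ S, G.IsIndepSet ↑I ∧ #S ≤ 3 * #I := by
  induction S using Finset.strongInduction with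
  | H S ih =>
  rcases S.eq_empty_or_nonempty with rfl | hS
  · exact ⟨∅, empty_subset _, by simp [SimpleGraph.IsIndepSet], by simp⟩
  obtain ⟨u, hu, hdeg⟩ := h.exists_card_adj_le_two hS
  set N := insert u {v ∈ S | G.Adj u v}
  have hrest : S \ N ⊂ S :=
    sdiff_ssubset (insert_subset hu (filter_subset _ _)) (insert_nonempty _ _)
  obtain ⟨I, hIS, hI, hcard⟩ := ih _ hrest (h.mono (by simp))
  have huI : u ∉ I := fun huI => (mem_sdiff.1 (hIS huI)).2 (mem_insert_self _ _)
  refine ⟨insert u I, insert_subset hu (hIS.trans sdiff_subset), ?_, ?_⟩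
  · have hnadj : ∀ v ∈ I, ¬G.Adj u v := fun v hv huv =>
      (mem_sdiff.1 (hIS hv)).2 (mem_insert_of_mem (mem_filter.2 ⟨(mem_sdiff.1 (hIS hv)).1, huv⟩))
    rw [coe_insert, SimpleGraph.IsIndepSet, Set.pairwise_insert]
    exact ⟨hI, fun v hv _ => ⟨hnadj v hv, fun hvu => hnadj v hv hvu.symm⟩⟩
  · have hN : #N ≤ 3 := (card_insert_le _ _).trans (by omega)
    have := card_le_card_sdiff_add_card (s := S) (t := N)
    rw [card_insert_of_notMem huI]
    omega

theorem card_common_adj_le_two (h : IsRobustIndep G ↑S) {u v : V} (hu : u ∈ S) (hv : v ∈ S)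
    (huv : u ≠ v) : #{w ∈ S | G.Adj u w ∧ G.Adj v w} ≤ 2 := by
  obtain ⟨f, hf⟩ := h.exists_selection
  calc #{w ∈ S | G.Adj u w ∧ G.Adj v w}
      ≤ #({w ∈ S | f u = s(u, w)} ∪ {w ∈ S | f v = s(v, w)}) := by
        refine card_le_card fun w hw => ?_
        obtain ⟨hwS, huw, hvw⟩ := mem_filter.1 hw
        simp only [mem_union, mem_filter, hwS, true_and]
        rcases hf hu hwS huw with hu' | hu'
        · exact Or.inl hu'
        rcases hf hv hwS hvw with hv' | hv'
        · exact Or.inr hv'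
        exact absurd (Sym2.congr_left.1 (hu'.symm.trans hv')) huv
    _ ≤ 1 + 1 := (card_union_le _ _).trans
        (Nat.add_le_add (Sym2.card_filter_eq_mk_le_one f u S) (Sym2.card_filter_eq_mk_le_one f v S))

end IsRobustIndep

theorem Nat.succ_mul_pow_mul_choose_le {n k c : ℕ} (hn : 8 * k ^ 2 ≤ n) (hc : 1 ≤ c)
    (hck : c + 1 ≤ k) :
    (c + 1) * (k ^ c * (n - (c + 1)).choose (k - (c + 1)))
      ≤ c * (k ^ (c - 1) * (n - c).choose (k - c)) := by
  have hkk : 8 * (k * k) ≤ n := by rwa [← sq]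
  have hk : k ≤ k * k := Nat.le_mul_self k
  obtain ⟨m, hm⟩ : ∃ m, n - c = m + 1 := ⟨n - (c + 1), by omega⟩
  obtain ⟨r, hr⟩ : ∃ r, k - c = r + 1 := ⟨k - (c + 1), by omega⟩
  rw [hm, hr, show n - (c + 1) = m by omega, show k - (c + 1) = r by omega]
  have hpow : k ^ c = k * k ^ (c - 1) := by rw [← _root_.pow_succ', Nat.sub_add_cancel hc]
  have hkey : (c + 1) * k * (r + 1) ≤ c * (m + 1) := by
    have h2k : 2 * (k * k) ≤ m + 1 := by omega
    calc (c + 1) * k * (r + 1) ≤ (2 * c) * k * k := by gcongr <;> omega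
      _ ≤ c * (m + 1) := by nlinarith
  refine Nat.le_of_mul_le_mul_right ?_ (Nat.succ_pos m)
  calc (c + 1) * (k ^ c * m.choose r) * (m + 1)
      = (c + 1) * k * k ^ (c - 1) * ((m + 1) * m.choose r) := by rw [hpow]; ring
    _ = (c + 1) * k * (r + 1) * (k ^ (c - 1) * (m + 1).choose (r + 1)) := by
        rw [Nat.add_one_mul_choose_eq]; ring
    _ ≤ c * (m + 1) * (k ^ (c - 1) * (m + 1).choose (r + 1)) := by gcongr
    _ = c * (k ^ (c - 1) * (m + 1).choose (r + 1)) * (m + 1) := by ring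

theorem Nat.mul_pow_mul_choose_le {n k c : ℕ} (hn : 8 * k ^ 2 ≤ n) (hc : 2 ≤ c) (hck : c ≤ k) :
    c * (k ^ (c - 1) * (n - c).choose (k - c)) ≤ 2 * k * (n - 2).choose (k - 2) := by
  induction c, hc using Nat.le_induction with
  | base => rw [pow_one, mul_assoc]
  | succ c hc ih =>
    rw [Nat.add_sub_cancel]
    exact (Nat.succ_mul_pow_mul_choose_le hn (by omega) hck).trans (ih (by omega))

namespace Finset

variable {α : Type*} {k : ℕ}

theorem sized_map_subtype (F : Finset {s : Finset α // #s = k}) :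
    (F.map (Function.Embedding.subtype _) : Set (Finset α)).Sized k := fun A hA => by
  obtain ⟨D, -, rfl⟩ := mem_map.1 hA
  exact D.2

variable [Fintype α] [DecidableEq α] {𝒜 : Finset (Finset α)}

theorem card_filter_subset_le_of_sized (h𝒜 : (𝒜 : Set (Finset α)).Sized k) (S : Finset α) :
    #{A ∈ 𝒜 | S ⊆ A} ≤ (Fintype.card α - #S).choose (k - #S) := by
  rw [← card_compl, ← card_powersetCard]
  refine card_le_card_of_injOn (· \ S) (fun A hA => ?_) fun A hA B hB hAB => ?_
  · obtain ⟨hA𝒜, hSA⟩ := mem_filter.1 hA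
    rw [mem_coe, mem_powersetCard, card_sdiff_of_subset hSA, h𝒜 hA𝒜]
    exact ⟨fun x hx => mem_compl.2 (mem_sdiff.1 hx).2, rfl⟩
  · rw [← sdiff_union_of_subset (mem_filter.1 hA).2, ← sdiff_union_of_subset (mem_filter.1 hB).2]
    exact congrArg (· ∪ S) hAB

/-- If every transversal of `𝒜` has at least `c` points, each `S` with `#S < c` misses some
member of `𝒜`, through which all members containing `S` must branch. -/
theorem card_filter_subset_le_of_intersecting (h𝒜 : (𝒜 : Set (Finset α)).Sized k)
    (hint : (𝒜 : Set (Finset α)).Intersecting) {c : ℕ}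
    (hc : ∀ T : Finset α, (∀ A ∈ 𝒜, ¬Disjoint T A) → c ≤ #T) {S : Finset α} (hS : #S ≤ c) :
    #{A ∈ 𝒜 | S ⊆ A} ≤ k ^ (c - #S) * (Fintype.card α - c).choose (k - c) := by
  obtain ⟨d, hd⟩ : ∃ d, c - #S = d := ⟨_, rfl⟩
  induction d generalizing S with
  | zero =>
    obtain rfl : #S = c := by omega
    simpa using card_filter_subset_le_of_sized h𝒜 S
  | succ d ih =>
    obtain ⟨D, hD, hSD⟩ : ∃ D ∈ 𝒜, Disjoint S D := by
      by_contra! hcover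
      have := hc S hcover
      omega
    have hbranch : {A ∈ 𝒜 | S ⊆ A} ⊆ D.biUnion fun y => {A ∈ 𝒜 | insert y S ⊆ A} := by
      intro A hA
      obtain ⟨hA𝒜, hSA⟩ := mem_filter.1 hA
      obtain ⟨y, hyA, hyD⟩ := not_disjoint_iff.1 (hint hA𝒜 hD)
      exact mem_biUnion.2 ⟨y, hyD, mem_filter.2 ⟨hA𝒜, insert_subset hyA hSA⟩⟩
    calc #{A ∈ 𝒜 | S ⊆ A}
        ≤ #D * (k ^ d * (Fintype.card α - c).choose (k - c)) := by
          refine (card_le_card hbranch).trans (card_biUnion_le_card_mul _ _ _ fun y hy => ?_)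
          have hyS : y ∉ S := fun hyS => disjoint_left.1 hSD hyS hy
          have hcard : #(insert y S) = #S + 1 := card_insert_of_notMem hyS
          have := ih (S := insert y S) (by omega) (by omega)
          rwa [hcard, show c - (#S + 1) = d by omega] at this
      _ = k ^ (c - #S) * (Fintype.card α - c).choose (k - c) := by
          rw [h𝒜 hD, hd, pow_succ]; ring

theorem exists_card_le_of_intersecting (h𝒜 : (𝒜 : Set (Finset α)).Sized k)
    (hint : (𝒜 : Set (Finset α)).Intersecting) (hne : 𝒜.Nonempty)
    (hcommon : ∀ x, ∃ A ∈ 𝒜, x ∉ A) :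
    ∃ c, 2 ≤ c ∧ c ≤ k ∧ #𝒜 ≤ c * (k ^ (c - 1) * (Fintype.card α - c).choose (k - c)) := by
  obtain ⟨A₁, hA₁⟩ := hne
  have hA₁cover : A₁ ∈ {T ∈ (univ : Finset α).powerset | ∀ A ∈ 𝒜, ¬Disjoint T A} :=
    mem_filter.2 ⟨mem_powerset.2 (subset_univ _), fun A hA => hint hA₁ hA⟩
  obtain ⟨T, hT, hTmin⟩ := exists_min_image _ card ⟨A₁, hA₁cover⟩
  have hTcover := (mem_filter.1 hT).2
  have hc : ∀ T' : Finset α, (∀ A ∈ 𝒜, ¬Disjoint T' A) → #T ≤ #T' := fun T' hT' =>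
    hTmin T' (mem_filter.2 ⟨mem_powerset.2 (subset_univ _), hT'⟩)
  have hT2 : 2 ≤ #T := by
    by_contra! hlt
    interval_cases h : #T
    · exact hTcover A₁ hA₁ (by simp [card_eq_zero.1 h])
    · obtain ⟨x, rfl⟩ := card_eq_one.1 h
      obtain ⟨A, hA, hxA⟩ := hcommon x
      exact hTcover A hA (disjoint_singleton_left.2 hxA)
  refine ⟨#T, hT2, h𝒜 hA₁ ▸ hTmin A₁ hA₁cover, ?_⟩
  have hpoint : ∀ t ∈ T, #{A ∈ 𝒜 | t ∈ A} ≤ k ^ (#T - 1) * (Fintype.card α - #T).choose (k - #T) :=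
    fun t _ => by
      simpa using card_filter_subset_le_of_intersecting h𝒜 hint hc (S := {t})
        (by rw [card_singleton]; omega)
  calc #𝒜 ≤ #(T.biUnion fun t => {A ∈ 𝒜 | t ∈ A}) := card_le_card fun A hA => by
        obtain ⟨t, htT, htA⟩ := not_disjoint_iff.1 (hTcover A hA)
        exact mem_biUnion.2 ⟨t, htT, mem_filter.2 ⟨hA, htA⟩⟩
    _ ≤ _ := card_biUnion_le_card_mul _ _ _ hpoint

theorem card_le_of_intersecting (h𝒜 : (𝒜 : Set (Finset α)).Sized k)
    (hint : (𝒜 : Set (Finset α)).Intersecting) (hcommon : ∀ x, ∃ A ∈ 𝒜, x ∉ A)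
    (hn : 8 * k ^ 2 ≤ Fintype.card α) :
    #𝒜 ≤ 2 * k * (Fintype.card α - 2).choose (k - 2) := by
  rcases 𝒜.eq_empty_or_nonempty with rfl | hne
  · simp
  obtain ⟨c, hc2, hck, hcard⟩ := exists_card_le_of_intersecting h𝒜 hint hne hcommon
  exact hcard.trans (Nat.mul_pow_mul_choose_le hn hc2 hck)

theorem card_filter_mem_mem_le (F : Finset {s : Finset α // #s = k}) {x y : α} (hxy : x ≠ y) :
    #{D ∈ F | x ∈ D.1 ∧ y ∈ D.1} ≤ (Fintype.card α - 2).choose (k - 2) := by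
  calc #{D ∈ F | x ∈ D.1 ∧ y ∈ D.1}
      = #{A ∈ F.map (Function.Embedding.subtype _) | {x, y} ⊆ A} := by
        simp only [filter_map, card_map, insert_subset_iff, singleton_subset_iff, Function.comp_def]
        congr 1
    _ ≤ _ := by
        simpa [card_pair hxy] using card_filter_subset_le_of_sized (sized_map_subtype F) {x, y}

end Finset

namespace kneserGraph

variable {n k : ℕ}

instance : DecidableRel (kneserGraph n k).Adj := fun A B =>
  inferInstanceAs (Decidable (A ≠ B ∧ Disjoint A.1 B.1))

theorem intersecting_of_isIndepSet {I : Finset {s : Finset (Fin n) // s.card = k}} (hk : 0 < k)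
    (hI : (kneserGraph n k).IsIndepSet ↑I) :
    (I.map (Function.Embedding.subtype _) : Set (Finset (Fin n))).Intersecting := by
  intro A hA B hB hAB
  obtain ⟨A, hAI, rfl⟩ := mem_map.1 hA
  obtain ⟨B, hBI, rfl⟩ := mem_map.1 hB
  by_cases h : A = B
  · subst h
    rw [Function.Embedding.subtype_apply, disjoint_self, bot_eq_empty, ← card_eq_zero, A.2] at hAB
    omega
  · exact hI hAI hBI h ⟨h, hAB⟩

end kneserGraph

namespace IsRobustIndep

variable {n k : ℕ} {F : Finset {s : Finset (Fin n) // s.card = k}}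

theorem card_filter_mem_le_of_notMem (hF : IsRobustIndep (kneserGraph n k) ↑F) {x : Fin n}
    {A B : {s : Finset (Fin n) // s.card = k}} (hA : A ∈ F) (hB : B ∈ F) (hAB : A ≠ B)
    (hxA : x ∉ A.1) (hxB : x ∉ B.1) :
    #{D ∈ F | x ∈ D.1} ≤ 2 * k * (n - 2).choose (k - 2) + 2 := by
  have hcover : {D ∈ F | x ∈ D.1} ⊆ {D ∈ F | (kneserGraph n k).Adj A D ∧ (kneserGraph n k).Adj B D}
      ∪ (A.1 ∪ B.1).biUnion fun y => {D ∈ F | x ∈ D.1 ∧ y ∈ D.1} := by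
    intro D hD
    obtain ⟨hDF, hxD⟩ := mem_filter.1 hD
    by_cases hmeet : Disjoint A.1 D.1 ∧ Disjoint B.1 D.1
    · refine mem_union_left _ (mem_filter.2 ⟨hDF, ⟨?_, hmeet.1⟩, ⟨?_, hmeet.2⟩⟩)
      · rintro rfl; exact hxA hxD
      · rintro rfl; exact hxB hxD
    · obtain ⟨y, hy, hyD⟩ : ∃ y ∈ A.1 ∪ B.1, y ∈ D.1 := by
        rw [not_and_or, not_disjoint_iff, not_disjoint_iff] at hmeet
        rcases hmeet with ⟨y, hyA, hyD⟩ | ⟨y, hyB, hyD⟩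
        · exact ⟨y, mem_union_left _ hyA, hyD⟩
        · exact ⟨y, mem_union_right _ hyB, hyD⟩
      exact mem_union_right _ (mem_biUnion.2 ⟨y, hy, mem_filter.2 ⟨hDF, hxD, hyD⟩⟩)
  have hunion : #(A.1 ∪ B.1) ≤ 2 * k := (card_union_le _ _).trans (by rw [A.2, B.2]; omega)
  calc #{D ∈ F | x ∈ D.1}
      ≤ 2 + #(A.1 ∪ B.1) * (n - 2).choose (k - 2) := by
        refine (card_le_card hcover).trans ((card_union_le _ _).trans (Nat.add_le_add
          (hF.card_common_adj_le_two hA hB hAB) (card_biUnion_le_card_mul _ _ _ fun y hy => ?_)))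
        refine (card_filter_mem_mem_le F fun hxy => ?_).trans_eq (by rw [Fintype.card_fin])
        rcases mem_union.1 hy with h | h
        · exact hxA (hxy ▸ h)
        · exact hxB (hxy ▸ h)
    _ ≤ 2 * k * (n - 2).choose (k - 2) + 2 := by
        rw [add_comm]; gcongr

theorem card_le_of_forall_card_filter_mem_le (hF : IsRobustIndep (kneserGraph n k) ↑F)
    (hk : 0 < k) {M : ℕ} (hM : ∀ x, #{D ∈ F | x ∈ D.1} ≤ M) : #F ≤ k * M + 2 := by
  rcases F.eq_empty_or_nonempty with rfl | hne
  · simp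
  obtain ⟨A, hA, hdeg⟩ := hF.exists_card_adj_le_two hne
  have hcover :
      F ⊆ {D ∈ F | (kneserGraph n k).Adj A D} ∪ A.1.biUnion fun x => {D ∈ F | x ∈ D.1} := by
    intro D hD
    by_cases hAdj : (kneserGraph n k).Adj A D
    · exact mem_union_left _ (mem_filter.2 ⟨hD, hAdj⟩)
    obtain ⟨x, hxA, hxD⟩ : ∃ x ∈ A.1, x ∈ D.1 := by
      by_cases hAD : A = D
      · subst hAD
        obtain ⟨x, hx⟩ := card_pos.1 (A.2.symm ▸ hk : 0 < #A.1)
        exact ⟨x, hx, hx⟩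
      · exact not_disjoint_iff.1 fun hdisj => hAdj ⟨hAD, hdisj⟩
    exact mem_union_right _ (mem_biUnion.2 ⟨x, hxA, mem_filter.2 ⟨hD, hxD⟩⟩)
  calc #F ≤ 2 + #A.1 * M := (card_le_card hcover).trans ((card_union_le _ _).trans
        (Nat.add_le_add hdeg (card_biUnion_le_card_mul _ _ _ fun x _ => hM x)))
    _ = k * M + 2 := by rw [A.2, add_comm]

end IsRobustIndep

/-- Let `k ≥ 2`, `n ≥ 8k²` and let `𝓕` be a robust independent family in
`KG(n,k)` such that every point of `[n]` is missed by at least two members of `𝓕`.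
Then `|𝓕| ≤ 8k·C(n-2, k-2)`. -/
theorem card_le_of_robustIndep_kneser (k n : ℕ) (hk : 2 ≤ k) (hn : 8 * k ^ 2 ≤ n)
    (F : Finset {s : Finset (Fin n) // s.card = k})
    (hind : IsRobustIndep (kneserGraph n k) ↑F)
    (hmiss : ∀ x : Fin n, ∃ A ∈ F, ∃ B ∈ F, A ≠ B ∧ x ∉ A.1 ∧ x ∉ B.1) :
    F.card ≤ 8 * k * (n - 2).choose (k - 2) := by
  have hdeg : ∀ x, #{D ∈ F | x ∈ D.1} ≤ 2 * k * (n - 2).choose (k - 2) + 2 := fun x => by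
    obtain ⟨A, hA, B, hB, hAB, hxA, hxB⟩ := hmiss x
    exact hind.card_filter_mem_le_of_notMem hA hB hAB hxA hxB
  obtain rfl | hk3 : k = 2 ∨ 3 ≤ k := by omega
  · exact (hind.card_le_of_forall_card_filter_mem_le two_pos hdeg).trans (by simp)
  obtain ⟨I, hIF, hI, hFI⟩ := hind.exists_isIndepSet
  have hIcard : #I ≤ 2 * k * (n - 2).choose (k - 2) + 2 := by
    by_cases hstar : ∃ x, ∀ D ∈ I, x ∈ D.1
    · obtain ⟨x, hx⟩ := hstar
      exact (card_le_card fun D hD => mem_filter.2 ⟨hIF hD, hx D hD⟩).trans (hdeg x)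
    · push Not at hstar
      have := card_le_of_intersecting (sized_map_subtype I)
        (kneserGraph.intersecting_of_isIndepSet (by omega) hI) (fun x => by simpa using hstar x)
        (by rwa [Fintype.card_fin])
      rw [card_map, Fintype.card_fin] at this
      omega
  have hkn : k ≤ n := (Nat.le_self_pow two_ne_zero k).trans (by omega)
  have hC : 1 ≤ (n - 2).choose (k - 2) := Nat.choose_pos (by omega)
  nlinarith
end
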